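/- arXiv:0901.0055 — 6 statements merged into one kernel-verified Lean document; each statement's English description precedes it below -/
import Mathlib

section
/- Let G be an abelian group and Z1,…,Zn independent discrete random variables in G. For subsets s of [n], write Z_s^+ = ∑_{i∈s} Z_i. Then the set function s ↦ H(Z_s^+) is submodular: for all s,t ⊆ [n], H(Z_{s∪t}^+) + H(Z_{s∩t}^+) ≤ H(Z_s^+) + H(Z_t^+). -/
open Finset

/-- Shannon entropy of a discrete random variable `X` on a finite probability
space with probability mass function `p`. -/
noncomputable def ent {Ω S : Type*} [Fintype Ω] (p : Ω → ℝ) (X : Ω → S) : ℝ :=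
  letI := Classical.decEq S
  ∑ y ∈ Finset.univ.image X,
    Real.negMulLog (∑ ω ∈ Finset.univ.filter (fun ω => X ω = y), p ω)

/-- Conditional Shannon entropy `H(X | Y)`. -/
noncomputable def condEnt {Ω S T : Type*} [Fintype Ω] (p : Ω → ℝ)
    (X : Ω → S) (Y : Ω → T) : ℝ :=
  ent p (fun ω => (X ω, Y ω)) - ent p Y

/-- Mutual information `I(X ; Y)`. -/
noncomputable def mutInf {Ω S T : Type*} [Fintype Ω] (p : Ω → ℝ)
    (X : Ω → S) (Y : Ω → T) : ℝ :=
  ent p X + ent p Y - ent p (fun ω => (X ω, Y ω))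

/-- `p` is a probability mass function. -/
def IsProbMass {Ω : Type*} [Fintype Ω] (p : Ω → ℝ) : Prop :=
  (∀ ω, 0 ≤ p ω) ∧ ∑ ω, p ω = 1

/-- The random variables `Z i` are mutually independent. -/
def IndepRVs {Ω G : Type*} [Fintype Ω] {n : ℕ} (p : Ω → ℝ) (Z : Fin n → Ω → G) : Prop :=
  letI := Classical.decEq G
  ∀ z : Fin n → G,
    (∑ ω ∈ Finset.univ.filter (fun ω => ∀ i, Z i ω = z i), p ω)
      = ∏ i, ∑ ω ∈ Finset.univ.filter (fun ω => Z i ω = z i), p ω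

/-! Write `A`, `B`, `C` for the sums over `s \ t`, `s ∩ t`, `t \ s`; they are independent.
Strong subadditivity `H(X, Y, W) + H(W) ≤ H(X, W) + H(Y, W)` for `X = A + B`, `Y = A`,
`W = A + B + C` gives the claim: the three joint entropies are, up to injective relabelling,
those of `(A, B, C)`, `(A + B, C)` and `(A, B + C)`, and entropy is additive on independent
pairs. Strong subadditivity is Gibbs' inequality for the joint law of `(X, Y, W)` against
`P(x, w) P(y, w) / P(w)`. -/

open Real

theorem sum_mul_log_le_sum_mul_log {ι : Type*} (s : Finset ι) {f g : ι → ℝ}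
    (hf : ∀ i ∈ s, 0 ≤ f i) (hg : ∀ i ∈ s, 0 ≤ g i) (hfg : ∀ i ∈ s, 0 < f i → 0 < g i)
    (hsum : ∑ i ∈ s, g i ≤ ∑ i ∈ s, f i) :
    ∑ i ∈ s, f i * log (g i) ≤ ∑ i ∈ s, f i * log (f i) := by
  have key : ∀ i ∈ s, f i * log (g i) - f i * log (f i) ≤ g i - f i := by
    intro i hi
    rcases (hf i hi).eq_or_lt with hfi | hfi
    · simpa [← hfi] using hg i hi
    have hgi := hfg i hi hfi
    calc f i * log (g i) - f i * log (f i) = f i * log (g i / f i) := by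
          rw [log_div hgi.ne' hfi.ne']; ring
      _ ≤ f i * (g i / f i - 1) :=
          mul_le_mul_of_nonneg_left (log_le_sub_one_of_pos (div_pos hgi hfi)) hfi.le
      _ = g i - f i := by field_simp
  have := sum_le_sum key
  rw [sum_sub_distrib, sum_sub_distrib] at this
  linarith

noncomputable def mass {Ω S : Type*} [Fintype Ω] [DecidableEq S] (p : Ω → ℝ) (X : Ω → S)
    (x : S) : ℝ :=
  ∑ ω ∈ univ.filter (fun ω => X ω = x), p ω

section Entropy

variable {Ω : Type*} [Fintype Ω] {p : Ω → ℝ} {S T U : Type*}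

lemma mass_nonneg [DecidableEq S] (hp : ∀ ω, 0 ≤ p ω) (X : Ω → S) (x : S) :
    0 ≤ mass p X x :=
  sum_nonneg fun ω _ => hp ω

lemma mass_eq_sum_ite [DecidableEq S] (X : Ω → S) (x : S) :
    mass p X x = ∑ ω, (if X ω = x then 1 else 0) * p ω := by
  simp only [mass, sum_filter, ite_mul, one_mul, zero_mul]

lemma sum_mass [DecidableEq S] {X : Ω → S} {I : Finset S} (hI : ∀ ω, X ω ∈ I) :
    ∑ x ∈ I, mass p X x = ∑ ω, p ω :=
  sum_fiberwise_of_maps_to (fun ω _ => hI ω) p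

lemma sum_mass_prod_left [DecidableEq S] [DecidableEq T] {X : Ω → S} {I : Finset S}
    (hI : ∀ ω, X ω ∈ I) (Y : Ω → T) (y : T) :
    ∑ x ∈ I, mass p (fun ω => (X ω, Y ω)) (x, y) = mass p Y y := by
  rw [mass, ← sum_fiberwise_of_maps_to (g := X) (fun ω _ => hI ω)]
  refine sum_congr rfl fun x _ => ?_
  simp only [mass, filter_filter, Prod.mk.injEq, and_comm]

lemma mass_comp_eq_sum [DecidableEq S] [DecidableEq T] {X : Ω → S} {I : Finset S}
    (hI : ∀ ω, X ω ∈ I) (f : S → T) (y : T) :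
    mass p (fun ω => f (X ω)) y = ∑ x ∈ I with f x = y, mass p X x := by
  rw [mass, ← sum_fiberwise_of_maps_to (g := X) (t := I.filter (f · = y))
    (fun ω hω => by simp_all)]
  refine sum_congr rfl fun x hx => ?_
  rw [mass, filter_filter]
  congr 1
  ext ω
  simp only [mem_filter, mem_univ, true_and, and_iff_right_iff_imp]
  rintro rfl
  exact (mem_filter.1 hx).2

lemma mass_le_mass_comp [DecidableEq S] [DecidableEq T] (hp : ∀ ω, 0 ≤ p ω) (X : Ω → S)
    (f : S → T) (x : S) :
    mass p X x ≤ mass p (fun ω => f (X ω)) (f x) :=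
  sum_le_sum_of_subset_of_nonneg (fun ω hω => by simp_all) fun ω _ _ => hp ω

lemma ent_eq_sum_negMulLog [DecidableEq S] {X : Ω → S} {I : Finset S} (hI : ∀ ω, X ω ∈ I) :
    ent p X = ∑ x ∈ I, negMulLog (mass p X x) := by
  have h : ent p X = ∑ x ∈ univ.image X, negMulLog (mass p X x) := by
    unfold ent mass
    congr!
  rw [h]
  refine sum_subset (by simpa [subset_iff] using hI) fun x _ hx => ?_
  rw [mass, filter_false_of_mem (by simpa using hx), sum_empty, negMulLog_zero]

lemma ent_comp_of_injective (X : Ω → S) {f : S → T} (hf : Function.Injective f) :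
    ent p (fun ω => f (X ω)) = ent p X := by
  classical
  rw [ent_eq_sum_negMulLog (I := (univ.image X).image f) (by simp),
    ent_eq_sum_negMulLog (I := univ.image X) (by simp), sum_image hf.injOn]
  refine sum_congr rfl fun x _ => ?_
  simp only [mass, hf.eq_iff]

lemma ent_comp_eq_neg_sum_mul_log [DecidableEq S] [DecidableEq T] {X : Ω → S} {I : Finset S}
    (hI : ∀ ω, X ω ∈ I) (f : S → T) :
    ent p (fun ω => f (X ω))
      = -∑ x ∈ I, mass p X x * log (mass p (fun ω => f (X ω)) (f x)) := by
  rw [ent_eq_sum_negMulLog (I := I.image f) fun ω => mem_image_of_mem f (hI ω),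
    ← sum_fiberwise_of_maps_to (g := f) (t := I.image f) (fun x hx => mem_image_of_mem f hx),
    ← sum_neg_distrib]
  refine sum_congr rfl fun y _ => ?_
  calc negMulLog (mass p (fun ω => f (X ω)) y)
      = -((∑ x ∈ I with f x = y, mass p X x) * log (mass p (fun ω => f (X ω)) y)) := by
        rw [negMulLog, neg_mul, ← mass_comp_eq_sum hI]
    _ = _ := by
        rw [sum_mul]
        exact congrArg _ (sum_congr rfl fun x hx => by rw [(mem_filter.1 hx).2])

lemma ent_prod_eq_add_of_mass_prod [DecidableEq S] [DecidableEq T] (hp : ∑ ω, p ω = 1)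
    (X : Ω → S) (Y : Ω → T)
    (h : ∀ x y, mass p (fun ω => (X ω, Y ω)) (x, y) = mass p X x * mass p Y y) :
    ent p (fun ω => (X ω, Y ω)) = ent p X + ent p Y := by
  have hX : ∀ ω, X ω ∈ univ.image X := by simp
  have hY : ∀ ω, Y ω ∈ univ.image Y := by simp
  rw [ent_eq_sum_negMulLog (I := univ.image X ×ˢ univ.image Y) (by simp),
    ent_eq_sum_negMulLog hX, ent_eq_sum_negMulLog hY, sum_product]
  simp_rw [h, negMulLog_mul, sum_add_distrib, ← mul_sum, ← sum_mul, sum_mass hX, sum_mass hY,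
    hp, one_mul]

lemma sum_mass_mul_mass_div_mass [DecidableEq S] [DecidableEq T] [DecidableEq U]
    {X : Ω → S} {Y : Ω → T} {W : Ω → U} {I : Finset S} {J : Finset T} {K : Finset U}
    (hI : ∀ ω, X ω ∈ I) (hJ : ∀ ω, Y ω ∈ J) (hK : ∀ ω, W ω ∈ K) :
    ∑ τ ∈ I ×ˢ J ×ˢ K, mass p (fun ω => (X ω, W ω)) (τ.1, τ.2.2)
        * mass p (fun ω => (Y ω, W ω)) (τ.2.1, τ.2.2) / mass p W τ.2.2 = ∑ ω, p ω := by
  calc _ = ∑ w ∈ K, (∑ x ∈ I, mass p (fun ω => (X ω, W ω)) (x, w))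
          * (∑ y ∈ J, mass p (fun ω => (Y ω, W ω)) (y, w)) / mass p W w := by
        simp_rw [sum_product, sum_mul_sum, sum_div, sum_comm (t := K)]
    _ = ∑ w ∈ K, mass p W w := by
        simp_rw [sum_mass_prod_left hI, sum_mass_prod_left hJ, mul_self_div_self]
    _ = ∑ ω, p ω := sum_mass hK

theorem ent_prod_three_add_ent_le (hp : ∀ ω, 0 ≤ p ω) (X : Ω → S) (Y : Ω → T) (W : Ω → U) :
    ent p (fun ω => (X ω, Y ω, W ω)) + ent p W
      ≤ ent p (fun ω => (X ω, W ω)) + ent p (fun ω => (Y ω, W ω)) := by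
  classical
  set I := univ.image X ×ˢ univ.image Y ×ˢ univ.image W
  have hI : ∀ ω, (X ω, Y ω, W ω) ∈ I := by simp [I]
  set P := mass p fun ω => (X ω, Y ω, W ω)
  set Pxw := fun τ : S × T × U => mass p (fun ω => (X ω, W ω)) (τ.1, τ.2.2)
  set Pyw := fun τ : S × T × U => mass p (fun ω => (Y ω, W ω)) (τ.2.1, τ.2.2)
  set Pw := fun τ : S × T × U => mass p W τ.2.2
  have hXYW : ent p (fun ω => (X ω, Y ω, W ω)) = -∑ τ ∈ I, P τ * log (P τ) :=
    ent_comp_eq_neg_sum_mul_log hI id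
  have hXW : ent p (fun ω => (X ω, W ω)) = -∑ τ ∈ I, P τ * log (Pxw τ) :=
    ent_comp_eq_neg_sum_mul_log hI fun τ => (τ.1, τ.2.2)
  have hYW : ent p (fun ω => (Y ω, W ω)) = -∑ τ ∈ I, P τ * log (Pyw τ) :=
    ent_comp_eq_neg_sum_mul_log hI fun τ => (τ.2.1, τ.2.2)
  have hW : ent p W = -∑ τ ∈ I, P τ * log (Pw τ) :=
    ent_comp_eq_neg_sum_mul_log hI fun τ => τ.2.2
  have hP : ∀ τ, 0 ≤ P τ := mass_nonneg hp _
  have hpos : ∀ τ, 0 < P τ → 0 < Pxw τ ∧ 0 < Pyw τ ∧ 0 < Pw τ := fun τ h =>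
    ⟨h.trans_le (mass_le_mass_comp hp _ (fun τ => (τ.1, τ.2.2)) τ),
      h.trans_le (mass_le_mass_comp hp _ (fun τ => (τ.2.1, τ.2.2)) τ),
      h.trans_le (mass_le_mass_comp hp _ (fun τ => τ.2.2) τ)⟩
  have gibbs := sum_mul_log_le_sum_mul_log I (f := P) (g := fun τ => Pxw τ * Pyw τ / Pw τ)
    (fun τ _ => hP τ)
    (fun τ _ => div_nonneg (mul_nonneg (mass_nonneg hp _ _) (mass_nonneg hp _ _))
      (mass_nonneg hp _ _))
    (fun τ _ h => by obtain ⟨h1, h2, h3⟩ := hpos τ h; positivity)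
    (by rw [sum_mass_mul_mass_div_mass (by simp) (by simp) (by simp), sum_mass hI])
  have split : ∑ τ ∈ I, P τ * log (Pxw τ * Pyw τ / Pw τ)
      = ∑ τ ∈ I, P τ * log (Pxw τ) + ∑ τ ∈ I, P τ * log (Pyw τ)
        - ∑ τ ∈ I, P τ * log (Pw τ) := by
    rw [← sum_add_distrib, ← sum_sub_distrib]
    refine sum_congr rfl fun τ _ => ?_
    rcases (hP τ).eq_or_lt with h0 | h
    · simp [← h0]
    obtain ⟨h1, h2, h3⟩ := hpos τ h
    rw [log_div (by positivity) h3.ne', log_mul h1.ne' h2.ne']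
    ring
  rw [split] at gibbs
  linarith

end Entropy

theorem sum_piFinset_mul_mul_sum_eq {ι α R : Type*} [Fintype ι] [DecidableEq ι]
    [CommSemiring R] (t : ι → Finset α) (m : ι → α → R) {a : Finset ι} {F G : (ι → α) → R}
    (hF : DependsOn F a) (hG : DependsOn G (↑a)ᶜ) :
    (∑ z ∈ Fintype.piFinset t, F z * G z * ∏ i, m i (z i))
        * ∑ z ∈ Fintype.piFinset t, ∏ i, m i (z i)
      = (∑ z ∈ Fintype.piFinset t, F z * ∏ i, m i (z i))
        * ∑ z ∈ Fintype.piFinset t, G z * ∏ i, m i (z i) := by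
  -- Exchanging the `a`-coordinates of two tuples is an involution that preserves the product
  -- weight, keeps `F` of the first tuple and moves `G` of the first tuple to the second.
  set σ : (ι → α) × (ι → α) → (ι → α) × (ι → α) :=
    fun z => (a.piecewise z.1 z.2, a.piecewise z.2 z.1)
  have hσ : ∀ z, σ (σ z) = z := fun z => by
    ext i <;> by_cases hi : i ∈ a <;> simp [σ, hi]
  have hmem : ∀ z ∈ Fintype.piFinset t ×ˢ Fintype.piFinset t,
      σ z ∈ Fintype.piFinset t ×ˢ Fintype.piFinset t := fun z hz => by
    simp only [mem_product, Fintype.mem_piFinset] at hz ⊢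
    exact ⟨fun i => a.piecewise_cases z.1 z.2 (· ∈ t i) (hz.1 i) (hz.2 i),
      fun i => a.piecewise_cases z.2 z.1 (· ∈ t i) (hz.2 i) (hz.1 i)⟩
  have hprod : ∀ z, (∏ i, m i ((σ z).1 i)) * ∏ i, m i ((σ z).2 i)
      = (∏ i, m i (z.1 i)) * ∏ i, m i (z.2 i) := fun z => by
    simp_rw [← prod_mul_distrib]
    refine prod_congr rfl fun i _ => ?_
    by_cases hi : i ∈ a <;> simp [σ, hi, mul_comm]
  have hFσ : ∀ z, F (σ z).1 = F z.1 := fun z =>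
    hF fun i hi => a.piecewise_eq_of_mem _ _ (mem_coe.1 hi)
  have hGσ : ∀ z, G (σ z).2 = G z.1 := fun z =>
    hG fun i hi => a.piecewise_eq_of_notMem _ _ (by simpa using hi)
  simp_rw [sum_mul_sum, ← sum_product']
  refine sum_nbij' σ σ hmem hmem (fun z _ => hσ z) (fun z _ => hσ z) fun z _ => ?_
  rw [hFσ, hGσ, mul_mul_mul_comm, hprod]
  ring

section Independence

variable {Ω G : Type*} [Fintype Ω] {p : Ω → ℝ} {n : ℕ} {Z : Fin n → Ω → G}

lemma IndepRVs.mass_eq_prod [DecidableEq G] (hZ : IndepRVs p Z) (z : Fin n → G) :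
    mass p (fun ω i => Z i ω) z = ∏ i, mass p (Z i) (z i) := by
  unfold IndepRVs at hZ
  convert hZ z using 2 <;> unfold mass
  · simp only [funext_iff]
    congr!
  · congr!

lemma sum_mul_eq_sum_piFinset [DecidableEq G] (hZ : IndepRVs p Z) (F : (Fin n → G) → ℝ) :
    ∑ ω, F (fun i => Z i ω) * p ω
      = ∑ z ∈ Fintype.piFinset fun i => univ.image (Z i), F z * ∏ i, mass p (Z i) (z i) := by
  rw [← sum_fiberwise_of_maps_to (g := fun ω i => Z i ω)
    (t := Fintype.piFinset fun i => univ.image (Z i)) (fun ω _ => by simp)]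
  refine sum_congr rfl fun z _ => ?_
  rw [← hZ.mass_eq_prod, mass, mul_sum]
  exact sum_congr rfl fun ω hω => by rw [(mem_filter.1 hω).2]

lemma mass_prod_eq_mul_of_dependsOn {S T : Type*} [DecidableEq S] [DecidableEq T]
    (hp : ∑ ω, p ω = 1) (hZ : IndepRVs p Z) {a : Finset (Fin n)}
    {f : (Fin n → G) → S} {g : (Fin n → G) → T} (hf : DependsOn f a) (hg : DependsOn g (↑a)ᶜ)
    (x : S) (y : T) :
    mass p (fun ω => (f fun i => Z i ω, g fun i => Z i ω)) (x, y)
      = mass p (fun ω => f fun i => Z i ω) x * mass p (fun ω => g fun i => Z i ω) y := by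
  classical
  have total := sum_mul_eq_sum_piFinset hZ fun _ => 1
  simp only [one_mul, hp] at total
  have key := sum_piFinset_mul_mul_sum_eq (fun i => univ.image (Z i)) (fun i => mass p (Z i))
    (a := a) (F := fun z => if f z = x then 1 else 0) (G := fun z => if g z = y then 1 else 0)
    (fun z z' h => by simp only [hf h]) (fun z z' h => by simp only [hg h])
  simp only [mass_eq_sum_ite]
  rw [sum_mul_eq_sum_piFinset hZ fun z => if (f z, g z) = (x, y) then 1 else 0,
    sum_mul_eq_sum_piFinset hZ fun z => if f z = x then 1 else 0,
    sum_mul_eq_sum_piFinset hZ fun z => if g z = y then 1 else 0, ← key, ← total, mul_one]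
  refine sum_congr rfl fun z _ => ?_
  simp only [Prod.mk.injEq, ite_zero_mul_ite_zero, one_mul, ite_and]

theorem ent_prod_eq_add_of_dependsOn {S T : Type*} (hp : ∑ ω, p ω = 1) (hZ : IndepRVs p Z)
    {a : Finset (Fin n)} {f : (Fin n → G) → S} {g : (Fin n → G) → T}
    (hf : DependsOn f a) (hg : DependsOn g (↑a)ᶜ) :
    ent p (fun ω => (f fun i => Z i ω, g fun i => Z i ω))
      = ent p (fun ω => f fun i => Z i ω) + ent p (fun ω => g fun i => Z i ω) := by
  classical
  exact ent_prod_eq_add_of_mass_prod hp _ _ (mass_prod_eq_mul_of_dependsOn hp hZ hf hg)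

end Independence

theorem ent_add_add_add_ent_le {Ω G : Type*} [Fintype Ω] [AddCommGroup G] {p : Ω → ℝ}
    (hp : ∀ ω, 0 ≤ p ω) (A B C : Ω → G)
    (hABC : ent p (fun ω => (A ω, B ω, C ω)) = ent p A + ent p B + ent p C)
    (hAB_C : ent p (fun ω => (A ω + B ω, C ω)) = ent p (fun ω => A ω + B ω) + ent p C)
    (hA_BC : ent p (fun ω => (A ω, B ω + C ω)) = ent p A + ent p (fun ω => B ω + C ω)) :
    ent p (fun ω => A ω + B ω + C ω) + ent p B
      ≤ ent p (fun ω => A ω + B ω) + ent p (fun ω => B ω + C ω) := by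
  have shear : Function.Injective fun v : G × G => (v.1, v.1 + v.2) := by
    rintro ⟨a, b⟩ ⟨a', b'⟩ h
    simp only [Prod.mk.injEq] at h
    obtain ⟨rfl, h⟩ := h
    exact Prod.ext rfl (add_left_cancel h)
  have shear₃ : Function.Injective
      fun v : G × G × G => (v.1 + v.2.1, v.1, v.1 + v.2.1 + v.2.2) := by
    rintro ⟨a, b, c⟩ ⟨a', b', c'⟩ h
    simp only [Prod.mk.injEq] at h
    obtain ⟨h₁, rfl, h₃⟩ := h
    obtain rfl := add_left_cancel h₁
    exact Prod.ext rfl (Prod.ext rfl (add_left_cancel h₃))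
  have e₁ := ent_comp_of_injective (p := p) (fun ω => (A ω, B ω, C ω)) shear₃
  have e₂ := ent_comp_of_injective (p := p) (fun ω => (A ω + B ω, C ω)) shear
  have e₃ := ent_comp_of_injective (p := p) (fun ω => (A ω, B ω + C ω)) shear
  simp only [← add_assoc] at e₁ e₂ e₃
  have := ent_prod_three_add_ent_le hp (fun ω => A ω + B ω) A (fun ω => A ω + B ω + C ω)
  linarith

lemma dependsOn_sum {ι M : Type*} [AddCommMonoid M] {b : Finset ι} {u : Set ι} (h : ↑b ⊆ u) :
    DependsOn (fun z : ι → M => ∑ i ∈ b, z i) u :=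
  fun _ _ hz => sum_congr rfl fun i hi => hz i (h hi)

theorem ent_sum_add_add_ent_le_of_disjoint {Ω G : Type*} [Fintype Ω] [AddCommGroup G]
    {p : Ω → ℝ} {n : ℕ} {Z : Fin n → Ω → G} (hp : IsProbMass p) (hZ : IndepRVs p Z)
    {a b c : Finset (Fin n)} (hab : Disjoint a b) (hac : Disjoint a c) (hbc : Disjoint b c) :
    ent p (fun ω => ∑ i ∈ a, Z i ω + ∑ i ∈ b, Z i ω + ∑ i ∈ c, Z i ω)
        + ent p (fun ω => ∑ i ∈ b, Z i ω)
      ≤ ent p (fun ω => ∑ i ∈ a, Z i ω + ∑ i ∈ b, Z i ω)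
        + ent p (fun ω => ∑ i ∈ b, Z i ω + ∑ i ∈ c, Z i ω) := by
  have hA := dependsOn_sum (M := G) (subset_refl (a : Set (Fin n)))
  have hB := dependsOn_sum (M := G) (subset_refl (b : Set (Fin n)))
  have hBa := dependsOn_sum (M := G) (disjoint_coe.2 hab).subset_compl_left
  have hCa := dependsOn_sum (M := G) (disjoint_coe.2 hac).subset_compl_left
  have hCb := dependsOn_sum (M := G) (disjoint_coe.2 hbc).subset_compl_left
  have hCab := dependsOn_sum (M := G)
    (disjoint_coe.2 (disjoint_union_left.2 ⟨hac, hbc⟩)).subset_compl_left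
  have hA_B_C := ent_prod_eq_add_of_dependsOn hp.2 hZ hA
    (g := fun z => (∑ i ∈ b, z i, ∑ i ∈ c, z i)) fun _ _ h => Prod.ext (hBa h) (hCa h)
  have hB_C := ent_prod_eq_add_of_dependsOn hp.2 hZ hB hCb
  have hAB_C := ent_prod_eq_add_of_dependsOn hp.2 hZ (a := a ∪ b)
    (f := fun z => ∑ i ∈ a, z i + ∑ i ∈ b, z i)
    (fun _ _ h => congrArg₂ (· + ·) (hA.mono (coe_subset.2 subset_union_left) h)
      (hB.mono (coe_subset.2 subset_union_right) h)) hCab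
  have hA_BC := ent_prod_eq_add_of_dependsOn hp.2 hZ hA
    (g := fun z => ∑ i ∈ b, z i + ∑ i ∈ c, z i) fun _ _ h => congrArg₂ (· + ·) (hBa h) (hCa h)
  exact ent_add_add_add_ent_le hp.1 _ _ _ (by rw [hA_B_C, hB_C, add_assoc]) hAB_C hA_BC

/-- Submodularity of the entropy of subset-sums of independent random variables in
an abelian group: $H(Z^+_{s\cup t}) + H(Z^+_{s\cap t}) \le H(Z^+_s) + H(Z^+_t)$. -/
theorem entropy_sum_submodular {Ω G : Type*} [Fintype Ω] [AddCommGroup G] {n : ℕ}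
    (p : Ω → ℝ) (hp : IsProbMass p) (Z : Fin n → Ω → G) (hZ : IndepRVs p Z)
    (s t : Finset (Fin n)) :
    ent p (fun ω => ∑ i ∈ s ∪ t, Z i ω) + ent p (fun ω => ∑ i ∈ s ∩ t, Z i ω)
      ≤ ent p (fun ω => ∑ i ∈ s, Z i ω) + ent p (fun ω => ∑ i ∈ t, Z i ω) := by
  have hs : ∀ ω, ∑ i ∈ s, Z i ω = ∑ i ∈ s \ t, Z i ω + ∑ i ∈ s ∩ t, Z i ω := fun ω => by
    rw [add_comm, sum_inter_add_sum_sdiff]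
  have ht : ∀ ω, ∑ i ∈ t, Z i ω = ∑ i ∈ s ∩ t, Z i ω + ∑ i ∈ t \ s, Z i ω := fun ω => by
    rw [inter_comm, sum_inter_add_sum_sdiff]
  have hst : ∀ ω, ∑ i ∈ s ∪ t, Z i ω
      = ∑ i ∈ s \ t, Z i ω + ∑ i ∈ s ∩ t, Z i ω + ∑ i ∈ t \ s, Z i ω := fun ω => by
    rw [← hs, ← sum_union disjoint_sdiff, union_sdiff_self_eq_union]
  simp only [hs, ht, hst]
  exact ent_sum_add_add_ent_le_of_disjoint hp hZ (disjoint_sdiff_inter s t)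
    (disjoint_sdiff.mono_left sdiff_subset) (disjoint_sdiff.mono_left inter_subset_left)
end

section
/- Let Z1,…,Zk be discrete random variables, and for 1 ≤ i < j ≤ k let Z_(i,j) denote the tuple (Z_t : i < t < j). Then for k ≥ 2: (k−1)·H(Z1,…,Zk) ≤ ∑_{1≤i<j≤k} H(Z_i, Z_j | Z_(i,j)). -/
open Finset

/-!
Write `h A` for the joint entropy of the `Z i` with `i ∈ A`, so that the summand for `i < j` is
`h [i, j] - h (i, j)`. Entropy is submodular, `h (A ∪ B) + h (A ∩ B) ≤ h A + h B` (conditional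
mutual information is nonnegative, by Gibbs' inequality), and `h ∅ = 0`. Induct on `k`: for each
`a < k`, submodularity for `[a, k]` and `[0, k)` gives
`h [0, k] - h [0, k) + h [a, k) - h (a, k) ≤ h [a, k] - h (a, k)`; summed over `a`, the terms
`h [a, k) - h [a + 1, k)` telescope to `h [0, k)`, which turns the induction hypothesis
`(k - 1) h [0, k) ≤ …` into `k h [0, k] ≤ …`.
-/

open Real

section Entropy

variable {Ω S T U V : Type*} [Fintype Ω] {p : Ω → ℝ}

open scoped Classical in
noncomputable def atomProb (p : Ω → ℝ) (X : Ω → S) (ω : Ω) : ℝ :=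
  ∑ ω' with X ω' = X ω, p ω'

open scoped Classical in
lemma atomProb_eq_sum_ite (X : Ω → S) (ω : Ω) :
    atomProb p X ω = ∑ ω', if X ω' = X ω then p ω' else 0 :=
  sum_filter _ _

lemma le_atomProb (hp0 : ∀ ω, 0 ≤ p ω) (X : Ω → S) (ω : Ω) : p ω ≤ atomProb p X ω :=
  single_le_sum (fun ω _ => hp0 ω) (by simp)

lemma atomProb_pos (hp0 : ∀ ω, 0 ≤ p ω) (X : Ω → S) {ω : Ω} (h : 0 < p ω) :
    0 < atomProb p X ω :=
  h.trans_le (le_atomProb hp0 X ω)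

lemma atomProb_congr {X : Ω → S} {Y : Ω → T} (h : ∀ ω ω', X ω = X ω' ↔ Y ω = Y ω') (ω : Ω) :
    atomProb p X ω = atomProb p Y ω :=
  sum_congr (by ext; simp [h]) fun _ _ => rfl

lemma atomProb_eq_of_eq {X : Ω → S} {ω ω' : Ω} (h : X ω = X ω') :
    atomProb p X ω = atomProb p X ω' := by
  rw [atomProb, atomProb, h]

lemma ent_eq_neg_sum_mul_log (p : Ω → ℝ) (X : Ω → S) :
    ent p X = -∑ ω, p ω * log (atomProb p X ω) := by
  classical
  rw [ent, ← sum_neg_distrib]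
  refine sum_image' _ fun ω _ => ?_
  have hfib : ∀ j ∈ univ.filter (X · = X ω),
      -(p j * log (atomProb p X j)) = -(p j * log (atomProb p X ω)) := fun j hj => by
    rw [atomProb_eq_of_eq (mem_filter.1 hj).2]
  rw [sum_congr rfl hfib, sum_neg_distrib, ← sum_mul, negMulLog, atomProb]
  ring

lemma ent_congr {X : Ω → S} {Y : Ω → T} (h : ∀ ω ω', X ω = X ω' ↔ Y ω = Y ω') :
    ent p X = ent p Y := by
  simp only [ent_eq_neg_sum_mul_log, atomProb_congr h]

lemma ent_eq_zero_of_forall_eq (hp1 : ∑ ω, p ω = 1) {X : Ω → S} (hX : ∀ ω ω', X ω = X ω') :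
    ent p X = 0 := by
  have h1 (ω : Ω) : atomProb p X ω = 1 := by simp [atomProb, hX _ ω, hp1]
  simp [ent_eq_neg_sum_mul_log, h1]

lemma sum_mul_log_le_zero (hp0 : ∀ ω, 0 ≤ p ω) {q : Ω → ℝ} (hq : ∀ ω, 0 < p ω → 0 < q ω)
    (hpq : ∑ ω, p ω * q ω ≤ ∑ ω, p ω) : ∑ ω, p ω * log (q ω) ≤ 0 := by
  have hterm (ω : Ω) : p ω * log (q ω) ≤ p ω * q ω - p ω := by
    rcases (hp0 ω).eq_or_lt with h | h
    · simp [← h]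
    · nlinarith [log_le_sub_one_of_pos (hq ω h)]
  calc ∑ ω, p ω * log (q ω) ≤ ∑ ω, (p ω * q ω - p ω) := sum_le_sum fun ω _ => hterm ω
    _ ≤ 0 := by rw [sum_sub_distrib]; linarith

lemma sum_div_atomProb_le_one (hp0 : ∀ ω, 0 ≤ p ω) {X : Ω → S} {s : Finset Ω}
    (hs : ∀ ω ∈ s, ∀ ω' ∈ s, X ω = X ω') : ∑ ω ∈ s, p ω / atomProb p X ω ≤ 1 := by
  rcases s.eq_empty_or_nonempty with rfl | ⟨ω₀, hω₀⟩
  · simp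
  rw [sum_congr rfl fun ω hω => by rw [atomProb_eq_of_eq (hs ω hω ω₀ hω₀)],
    ← sum_div]
  refine div_le_one_of_le₀ ?_ (sum_nonneg fun ω _ => hp0 ω)
  exact sum_le_sum_of_subset_of_nonneg (fun ω hω => by simp [hs ω hω ω₀ hω₀])
    fun ω _ _ => hp0 ω

open scoped Classical in
lemma sum_mul_atomProb_div_le (hp0 : ∀ ω, 0 ≤ p ω) {X : Ω → S} {A : Ω → T} {B : Ω → U}
    {C : Ω → V} (hX : ∀ ω ω', A ω = A ω' → B ω = B ω' → X ω = X ω')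
    (hAC : ∀ ω ω', A ω = A ω' → C ω = C ω') (hBC : ∀ ω ω', B ω = B ω' → C ω = C ω') :
    ∑ ω, p ω * (atomProb p A ω * atomProb p B ω / (atomProb p X ω * atomProb p C ω))
      ≤ ∑ ω, p ω := by
  -- Expand `P(A = A ω)` and `P(B = B ω)` as sums over `ω₁`, `ω₂`. For fixed `ω₁, ω₂` the `ω` with
  -- `A ω = A ω₁` and `B ω = B ω₂` lie in a single atom of `X`, and exist only if `C ω₁ = C ω₂`.
  have hterm (ω ω₁ ω₂ : Ω) :
      (if A ω₁ = A ω then p ω₁ else 0) * (if B ω₂ = B ω then p ω₂ else 0)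
          * (p ω / (atomProb p X ω * atomProb p C ω))
        = if A ω = A ω₁ ∧ B ω = B ω₂ then
            p ω₁ * p ω₂ / atomProb p C ω₁ * (p ω / atomProb p X ω) else 0 := by
    by_cases h₁ : A ω = A ω₁ <;> by_cases h₂ : B ω = B ω₂ <;> simp [h₁, h₂, eq_comm]
    rw [atomProb_eq_of_eq (hAC _ _ h₁)]
    ring
  have hfiber (ω₁ ω₂ : Ω) :
      ∑ ω, (if A ω = A ω₁ ∧ B ω = B ω₂ then
          p ω₁ * p ω₂ / atomProb p C ω₁ * (p ω / atomProb p X ω) else 0)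
        ≤ if C ω₂ = C ω₁ then p ω₁ * p ω₂ / atomProb p C ω₁ else 0 := by
    have hc : 0 ≤ p ω₁ * p ω₂ / atomProb p C ω₁ :=
      div_nonneg (mul_nonneg (hp0 ω₁) (hp0 ω₂)) ((hp0 ω₁).trans (le_atomProb hp0 C ω₁))
    rw [← sum_filter, ← mul_sum]
    split_ifs with hC
    · refine mul_le_of_le_one_right hc (sum_div_atomProb_le_one hp0 fun ω hω ω' hω' => ?_)
      simp only [mem_filter, mem_univ, true_and] at hω hω'
      exact hX _ _ (hω.1.trans hω'.1.symm) (hω.2.trans hω'.2.symm)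
    · rw [filter_false_of_mem, sum_empty, mul_zero]
      rintro ω - ⟨h₁, h₂⟩
      exact hC ((hBC _ _ h₂).symm.trans (hAC _ _ h₁))
  calc ∑ ω, p ω * (atomProb p A ω * atomProb p B ω / (atomProb p X ω * atomProb p C ω))
      = ∑ ω, ∑ ω₁, ∑ ω₂, if A ω = A ω₁ ∧ B ω = B ω₂ then
          p ω₁ * p ω₂ / atomProb p C ω₁ * (p ω / atomProb p X ω) else 0 := by
        refine sum_congr rfl fun ω _ => ?_
        simp only [← hterm, atomProb_eq_sum_ite A, atomProb_eq_sum_ite B, ← sum_mul,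
          sum_mul_sum]
        ring
    _ ≤ ∑ ω₁, ∑ ω₂, if C ω₂ = C ω₁ then p ω₁ * p ω₂ / atomProb p C ω₁ else 0 := by
        rw [sum_comm]
        refine sum_le_sum fun ω₁ _ => ?_
        rw [sum_comm]
        exact sum_le_sum fun ω₂ _ => hfiber ω₁ ω₂
    _ = ∑ ω₁, p ω₁ / atomProb p C ω₁ * atomProb p C ω₁ := by
        refine sum_congr rfl fun ω₁ _ => ?_
        rw [atomProb_eq_sum_ite C, mul_sum]
        refine sum_congr rfl fun ω₂ _ => ?_
        split_ifs <;> ring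
    _ ≤ ∑ ω₁, p ω₁ := sum_le_sum fun ω₁ _ => by
        rw [div_mul_eq_mul_div, mul_div_assoc]
        exact mul_le_of_le_one_right (hp0 ω₁) (div_self_le_one _)

theorem ent_add_ent_le_ent_add_ent (hp0 : ∀ ω, 0 ≤ p ω) {X : Ω → S} {A : Ω → T} {B : Ω → U}
    {C : Ω → V} (hX : ∀ ω ω', A ω = A ω' → B ω = B ω' → X ω = X ω')
    (hAC : ∀ ω ω', A ω = A ω' → C ω = C ω') (hBC : ∀ ω ω', B ω = B ω' → C ω = C ω') :
    ent p X + ent p C ≤ ent p A + ent p B := by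
  have hpos {ω : Ω} (h : 0 < p ω) : 0 < atomProb p A ω ∧ 0 < atomProb p B ω ∧
      0 < atomProb p X ω ∧ 0 < atomProb p C ω :=
    ⟨atomProb_pos hp0 A h, atomProb_pos hp0 B h, atomProb_pos hp0 X h, atomProb_pos hp0 C h⟩
  have hgibbs := sum_mul_log_le_zero hp0
    (q := fun ω => atomProb p A ω * atomProb p B ω / (atomProb p X ω * atomProb p C ω))
    (fun ω h => by obtain ⟨_, _, _, _⟩ := hpos h; positivity)
    (sum_mul_atomProb_div_le hp0 hX hAC hBC)
  have hlog (ω : Ω) :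
      p ω * log (atomProb p A ω * atomProb p B ω / (atomProb p X ω * atomProb p C ω))
        = p ω * log (atomProb p A ω) + p ω * log (atomProb p B ω)
          - p ω * log (atomProb p X ω) - p ω * log (atomProb p C ω) := by
    rcases (hp0 ω).eq_or_lt with h | h
    · simp [← h]
    obtain ⟨_, _, _, _⟩ := hpos h
    rw [log_div (by positivity) (by positivity), log_mul (by positivity) (by positivity),
      log_mul (by positivity) (by positivity)]
    ring
  simp only [hlog, sum_sub_distrib, sum_add_distrib] at hgibbs
  simp only [ent_eq_neg_sum_mul_log]
  linarith

end Entropy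

theorem sub_one_mul_le_sum_Icc_sub_Ioo {h : Finset ℕ → ℝ} (h_empty : h ∅ = 0)
    (h_submod : ∀ A B, h (A ∪ B) + h (A ∩ B) ≤ h A + h B) (n : ℕ) :
    ((n : ℝ) - 1) * h (range n)
      ≤ ∑ b ∈ range n, ∑ a ∈ range b, (h (Icc a b) - h (Ioo a b)) := by
  induction n with
  | zero => simp [h_empty]
  | succ n ih =>
    have hstep (a : ℕ) (ha : a ∈ range n) :
        h (range (n + 1)) - h (range n) + (h (Ico a n) - h (Ico (a + 1) n))
          ≤ h (Icc a n) - h (Ioo a n) := by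
      have hunion : Icc a n ∪ range n = range (n + 1) := by
        ext; simp only [mem_union, mem_Icc, mem_range] at ha ⊢; omega
      have hinter : Icc a n ∩ range n = Ico a n := by
        ext; simp only [mem_inter, mem_Icc, mem_range, mem_Ico]; omega
      have hsub := h_submod (Icc a n) (range n)
      rw [hunion, hinter] at hsub
      rw [Ico_add_one_left_eq_Ioo]
      linarith
    have htelescope : ∑ a ∈ range n, (h (Ico a n) - h (Ico (a + 1) n)) = h (range n) := by
      rw [sum_range_sub' (fun a => h (Ico a n)), Ico_self, h_empty, sub_zero, range_eq_Ico]
    calc (((n + 1 : ℕ) : ℝ) - 1) * h (range (n + 1))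
        = ((n : ℝ) - 1) * h (range n) + ∑ a ∈ range n,
            (h (range (n + 1)) - h (range n) + (h (Ico a n) - h (Ico (a + 1) n))) := by
          rw [sum_add_distrib, htelescope, sum_const, card_range, nsmul_eq_mul]
          push_cast
          ring
      _ ≤ ∑ b ∈ range n, ∑ a ∈ range b, (h (Icc a b) - h (Ioo a b))
            + ∑ a ∈ range n, (h (Icc a n) - h (Ioo a n)) :=
          add_le_add ih (sum_le_sum hstep)
      _ = _ := (sum_range_succ _ n).symm

lemma Fin.sum_filter_lt_eq_sum_range {M : Type*} [AddCommMonoid M] (k : ℕ) (f : ℕ → ℕ → M) :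
    ∑ q ∈ univ.filter (fun q : Fin k × Fin k => q.1 < q.2), f q.1 q.2
      = ∑ b ∈ range k, ∑ a ∈ range b, f a b := by
  rw [sum_sigma']
  refine sum_bij' (fun q _ => ⟨q.2, q.1⟩)
    (fun x hx => (⟨x.2, by simp at hx; omega⟩, ⟨x.1, by simp at hx; omega⟩)) ?_ ?_ ?_ ?_ ?_
  all_goals intro x hx; simp only [mem_filter, mem_sigma, mem_range] at hx; simp_all

lemma Fin.forall_Icc_iff {k : ℕ} {P : Fin k → Prop} {i j : Fin k} (hij : i ≤ j) :
    (∀ t : Fin k, (t : ℕ) ∈ Icc (i : ℕ) j → P t)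
      ↔ (P i ∧ P j) ∧ ∀ t, i < t ∧ t < j → P t := by
  simp only [mem_Icc, ← Fin.le_def]
  constructor
  · intro h
    exact ⟨⟨h i ⟨le_rfl, hij⟩, h j ⟨hij, le_rfl⟩⟩, fun t ht => h t ⟨ht.1.le, ht.2.le⟩⟩
  · rintro ⟨⟨hi, hj⟩, hmid⟩ t ⟨hit, htj⟩
    rcases hit.eq_or_lt with rfl | hit
    · exact hi
    rcases htj.eq_or_lt with rfl | htj
    · exact hj
    exact hmid t ⟨hit, htj⟩

section IndexedFamily

variable {Ω S : Type*} [Fintype Ω] {k : ℕ} {p : Ω → ℝ}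

/-- Indices are read in `ℕ`, so that intervals such as `Icc a b` need no truncation at `k`. -/
noncomputable def entOn (p : Ω → ℝ) (Z : Fin k → Ω → S) (A : Finset ℕ) : ℝ :=
  ent p (fun ω (i : {i : Fin k // (i : ℕ) ∈ A}) => Z i ω)

lemma ent_eq_entOn {T : Type*} {X : Ω → T} {Z : Fin k → Ω → S} {A : Finset ℕ}
    (h : ∀ ω ω', X ω = X ω' ↔ ∀ i : Fin k, (i : ℕ) ∈ A → Z i ω = Z i ω') :
    ent p X = entOn p Z A :=
  ent_congr fun ω ω' => by simp [h, funext_iff]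

lemma entOn_union_add_entOn_inter_le (hp0 : ∀ ω, 0 ≤ p ω) (Z : Fin k → Ω → S)
    (A B : Finset ℕ) :
    entOn p Z (A ∪ B) + entOn p Z (A ∩ B) ≤ entOn p Z A + entOn p Z B := by
  refine ent_add_ent_le_ent_add_ent hp0 ?_ ?_ ?_ <;>
    simp only [funext_iff, Subtype.forall, mem_union, mem_inter]
  · exact fun ω ω' hA hB i hi => hi.elim (hA i) (hB i)
  · exact fun ω ω' hA i hi => hA i hi.1
  · exact fun ω ω' hB i hi => hB i hi.2

lemma entOn_empty (hp1 : ∑ ω, p ω = 1) (Z : Fin k → Ω → S) : entOn p Z ∅ = 0 :=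
  ent_eq_zero_of_forall_eq hp1 fun _ _ => funext fun i => absurd i.2 (notMem_empty _)

end IndexedFamily

theorem entropy_pairs_conditioned_general {Ω S : Type*} [Fintype Ω] {k : ℕ}
    (p : Ω → ℝ) (hp : IsProbMass p) (Z : Fin k → Ω → S) :
    ((k : ℝ) - 1) * ent p (fun ω => fun i => Z i ω)
      ≤ ∑ q ∈ Finset.univ.filter (fun q : Fin k × Fin k => q.1 < q.2),
          condEnt p (fun ω => (Z q.1 ω, Z q.2 ω))
            (fun ω => fun t : {t : Fin k // q.1 < t ∧ t < q.2} => Z t ω) := by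
  have hfull : ent p (fun ω i => Z i ω) = entOn p Z (range k) :=
    ent_eq_entOn fun ω ω' => by simp [funext_iff]
  have hpair (i j : Fin k) (hij : i < j) :
      condEnt p (fun ω => (Z i ω, Z j ω)) (fun ω (t : {t : Fin k // i < t ∧ t < j}) => Z t ω)
        = entOn p Z (Icc i j) - entOn p Z (Ioo i j) := by
    rw [condEnt, ent_eq_entOn fun ω ω' => ?_, ent_eq_entOn fun ω ω' => ?_]
    · simp [funext_iff]
    · simp only [Prod.mk.injEq, funext_iff, Subtype.forall, Fin.forall_Icc_iff hij.le]
  rw [hfull, sum_congr rfl fun q hq => hpair q.1 q.2 (mem_filter.1 hq).2,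
    Fin.sum_filter_lt_eq_sum_range k fun a b => entOn p Z (Icc a b) - entOn p Z (Ioo a b)]
  exact sub_one_mul_le_sum_Icc_sub_Ioo (entOn_empty hp.2 Z)
    (entOn_union_add_entOn_inter_le hp.1 Z) k

/-- For any discrete random variables $Z_1,\dots,Z_k$ ($k\ge 2$),
$(k-1)H(Z_1,\dots,Z_k) \le \sum_{i<j} H(Z_i,Z_j \mid Z_{(i,j)})$, where
$Z_{(i,j)}$ is the tuple of variables with index strictly between $i$ and $j$. -/
theorem entropy_pairs_conditioned {Ω S : Type*} [Fintype Ω] {k : ℕ} (hk : 2 ≤ k)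
    (p : Ω → ℝ) (hp : IsProbMass p) (Z : Fin k → Ω → S) :
    ((k : ℝ) - 1) * ent p (fun ω => fun i => Z i ω)
      ≤ ∑ q ∈ Finset.univ.filter (fun q : Fin k × Fin k => q.1 < q.2),
          condEnt p (fun ω => (Z q.1 ω, Z q.2 ω))
            (fun ω => fun t : {t : Fin k // q.1 < t ∧ t < q.2} => Z t ω) :=
  entropy_pairs_conditioned_general p hp Z
end

section
/- Let X1,…,Xk be finite sets, C a collection of subsets of [k], and α: C → ℝ≥0 a fractional covering of [k]. For any finite set Y ⊆ X1 × ⋯ × Xk, |Y| ≤ ∏_{s∈C} |π_s(Y)|^{α_s}, where π_s denotes the coordinate projection onto the coordinates in s. -/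
/-!
Induct on the set `I` of coordinates kept, proving
`|π_I(Y)| ≤ ∏_{s ∈ C} |π_{s ∩ I}(Y)|^{α_s}`. To add a coordinate `a`, split `Y` into the fibres
`Y_v = {x ∈ Y | x a = v}`: then `|π_{I ∪ {a}}(Y)| = ∑_v |π_I(Y_v)|`. Bound each summand by the
induction hypothesis; the factors with `a ∉ s` are at most `|π_{s ∩ (I ∪ {a})}(Y)|`, and the
remaining sum over `v` is handled by Hölder's inequality for the weights `α_s` with `a ∈ s`, which
sum to at least `1`, because `∑_v |π_{s ∩ I}(Y_v)| = |π_{s ∩ (I ∪ {a})}(Y)|` when `a ∈ s`.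
-/

open Finset MeasureTheory

theorem Real.sum_rpow_le_rpow_sum {ι : Type*} (s : Finset ι) {f : ι → ℝ} (hf : ∀ i ∈ s, 0 ≤ f i)
    {p : ℝ} (hp : 1 ≤ p) : ∑ i ∈ s, f i ^ p ≤ (∑ i ∈ s, f i) ^ p := by
  classical
  induction s using Finset.induction_on with
  | empty => simp [Real.zero_rpow (by linarith : p ≠ 0)]
  | insert a s ha ih =>
    rw [sum_insert ha, sum_insert ha]
    have hfs : ∀ i ∈ s, 0 ≤ f i := fun i hi => hf i (mem_insert_of_mem hi)
    calc f a ^ p + ∑ i ∈ s, f i ^ p ≤ f a ^ p + (∑ i ∈ s, f i) ^ p := by gcongr; exact ih hfs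
      _ ≤ (f a + ∑ i ∈ s, f i) ^ p :=
        Real.add_rpow_le_rpow_add (hf a (mem_insert_self a s)) (sum_nonneg hfs) hp

theorem Real.sum_prod_rpow_le_prod_sum_rpow_of_sum_eq_one {ι κ : Type*} (s : Finset ι)
    (t : Finset κ) {w : ι → ℝ} {f : ι → κ → ℝ} (hw : ∀ i ∈ s, 0 ≤ w i)
    (hw1 : ∑ i ∈ s, w i = 1) (hf : ∀ i ∈ s, ∀ j ∈ t, 0 ≤ f i j) :
    ∑ j ∈ t, ∏ i ∈ s, f i j ^ w i ≤ ∏ i ∈ s, (∑ j ∈ t, f i j) ^ w i := by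
  -- Hölder's inequality for several `∫⁻`s, against the counting measure on `t`.
  let : MeasurableSpace κ := ⊤
  have hHolder := ENNReal.lintegral_prod_norm_pow_le (μ := Measure.count.restrict t) s
    (f := fun i j => ENNReal.ofReal (f i j)) (fun i _ => measurable_from_top.aemeasurable) hw1 hw
  simp only [lintegral_finset, Measure.count_singleton, mul_one] at hHolder
  have hprod : ∀ j ∈ t, 0 ≤ ∏ i ∈ s, f i j ^ w i := fun j hj =>
    prod_nonneg fun i hi => Real.rpow_nonneg (hf i hi j hj) _
  have hsum : ∀ i ∈ s, 0 ≤ ∑ j ∈ t, f i j := fun i hi => sum_nonneg (hf i hi)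
  rw [← ENNReal.ofReal_le_ofReal_iff (prod_nonneg fun i hi => Real.rpow_nonneg (hsum i hi) _),
    ENNReal.ofReal_sum_of_nonneg hprod, ENNReal.ofReal_prod_of_nonneg fun i hi =>
      Real.rpow_nonneg (hsum i hi) _]
  convert hHolder using 2 with j hj i hi i hi
  · rw [ENNReal.ofReal_prod_of_nonneg fun i hi => Real.rpow_nonneg (hf i hi j hj) _]
    exact prod_congr rfl fun i hi =>
      (ENNReal.ofReal_rpow_of_nonneg (hf i hi j hj) (hw i hi)).symm
  · rw [← ENNReal.ofReal_rpow_of_nonneg (hsum i hi) (hw i hi),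
      ENNReal.ofReal_sum_of_nonneg (hf i hi)]

theorem Real.sum_prod_rpow_le_prod_sum_rpow {ι κ : Type*} (s : Finset ι) (t : Finset κ)
    {w : ι → ℝ} {f : ι → κ → ℝ} (hw : ∀ i ∈ s, 0 ≤ w i) (hw1 : 1 ≤ ∑ i ∈ s, w i)
    (hf : ∀ i ∈ s, ∀ j ∈ t, 0 ≤ f i j) :
    ∑ j ∈ t, ∏ i ∈ s, f i j ^ w i ≤ ∏ i ∈ s, (∑ j ∈ t, f i j) ^ w i := by
  set T := ∑ i ∈ s, w i
  have hT : 0 < T := one_pos.trans_le hw1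
  have hsum : ∀ i ∈ s, 0 ≤ ∑ j ∈ t, f i j := fun i hi => sum_nonneg (hf i hi)
  -- Rescaling the exponents by `T` reduces to Hölder's inequality for exponents summing to `1`.
  have hrescale : ∀ {g : ι → ℝ}, (∀ i ∈ s, 0 ≤ g i) →
      ∏ i ∈ s, g i ^ w i = (∏ i ∈ s, g i ^ (w i / T)) ^ T := fun {g} hg => by
    rw [← Real.finsetProd_rpow _ _ (fun i hi => Real.rpow_nonneg (hg i hi) _)]
    refine prod_congr rfl fun i hi => ?_
    rw [← Real.rpow_mul (hg i hi), div_mul_cancel₀ _ hT.ne']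
  have hw' : ∀ i ∈ s, 0 ≤ w i / T := fun i hi => div_nonneg (hw i hi) hT.le
  have hw1' : ∑ i ∈ s, w i / T = 1 := by rw [← sum_div, div_self hT.ne']
  calc ∑ j ∈ t, ∏ i ∈ s, f i j ^ w i
      = ∑ j ∈ t, (∏ i ∈ s, f i j ^ (w i / T)) ^ T :=
        sum_congr rfl fun j hj => hrescale fun i hi => hf i hi j hj
    _ ≤ (∑ j ∈ t, ∏ i ∈ s, f i j ^ (w i / T)) ^ T :=
        Real.sum_rpow_le_rpow_sum t
          (fun j hj => prod_nonneg fun i hi => Real.rpow_nonneg (hf i hi j hj) _) hw1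
    _ ≤ (∏ i ∈ s, (∑ j ∈ t, f i j) ^ (w i / T)) ^ T := by
        gcongr
        · exact sum_nonneg fun j hj => prod_nonneg fun i hi => Real.rpow_nonneg (hf i hi j hj) _
        · exact Real.sum_prod_rpow_le_prod_sum_rpow_of_sum_eq_one s t hw' hw1' hf
    _ = ∏ i ∈ s, (∑ j ∈ t, f i j) ^ w i := (hrescale hsum).symm

theorem Real.sum_prod_rpow_le_prod_rpow_of_le {ι κ : Type*} (s : Finset ι) (t : Finset κ)
    (p : ι → Prop) [DecidablePred p] {w : ι → ℝ} {f : ι → κ → ℝ} {D : ι → ℝ}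
    (hw : ∀ i ∈ s, 0 ≤ w i) (hw1 : 1 ≤ ∑ i ∈ s with p i, w i)
    (hf : ∀ i ∈ s, ∀ j ∈ t, 0 ≤ f i j) (hD : ∀ i ∈ s, 0 ≤ D i)
    (hsum : ∀ i ∈ s, p i → ∑ j ∈ t, f i j = D i) (hle : ∀ i ∈ s, ¬p i → ∀ j ∈ t, f i j ≤ D i) :
    ∑ j ∈ t, ∏ i ∈ s, f i j ^ w i ≤ ∏ i ∈ s, D i ^ w i := by
  have hfw : ∀ i ∈ s, ∀ j ∈ t, 0 ≤ f i j ^ w i := fun i hi j hj =>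
    Real.rpow_nonneg (hf i hi j hj) _
  simp only [← prod_filter_mul_prod_filter_not s p]
  calc ∑ j ∈ t, (∏ i ∈ s with p i, f i j ^ w i) * ∏ i ∈ s with ¬p i, f i j ^ w i
      ≤ ∑ j ∈ t, (∏ i ∈ s with p i, f i j ^ w i) * ∏ i ∈ s with ¬p i, D i ^ w i := by
        refine sum_le_sum fun j hj => mul_le_mul_of_nonneg_left
          (prod_le_prod (fun i hi => hfw i (mem_filter.1 hi).1 j hj) fun i hi => ?_)
          (prod_nonneg fun i hi => hfw i (mem_filter.1 hi).1 j hj)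
        rw [mem_filter] at hi
        exact Real.rpow_le_rpow (hf i hi.1 j hj) (hle i hi.1 hi.2 j hj) (hw i hi.1)
    _ ≤ (∏ i ∈ s with p i, (∑ j ∈ t, f i j) ^ w i) * ∏ i ∈ s with ¬p i, D i ^ w i := by
        rw [← sum_mul]
        refine mul_le_mul_of_nonneg_right ?_
          (prod_nonneg fun i hi => Real.rpow_nonneg (hD i (mem_filter.1 hi).1) _)
        exact Real.sum_prod_rpow_le_prod_sum_rpow _ t (fun i hi => hw i (mem_filter.1 hi).1) hw1
          fun i hi => hf i (mem_filter.1 hi).1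
    _ = (∏ i ∈ s with p i, D i ^ w i) * ∏ i ∈ s with ¬p i, D i ^ w i := by
        congr 1
        exact prod_congr rfl fun i hi => by rw [hsum i (mem_filter.1 hi).1 (mem_filter.1 hi).2]

namespace Finset

variable {ι : Type*} {π : ι → Type*} [DecidableEq ι] [∀ i, DecidableEq (π i)]

theorem card_image_restrict_insert_of_forall_eq {Z : Finset (∀ i, π i)} {a : ι} {v : π a}
    (hZ : ∀ x ∈ Z, x a = v) (I : Finset ι) :
    #(Z.image (insert a I).restrict) = #(Z.image I.restrict) := by
  rw [← restrict₂_comp_restrict (subset_insert a I), ← image_image]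
  refine (card_image_of_injOn ?_).symm
  intro z hz z' hz' h
  obtain ⟨x, hx, rfl⟩ := mem_image.1 hz
  obtain ⟨x', hx', rfl⟩ := mem_image.1 hz'
  funext ⟨i, hi⟩
  rcases mem_insert.1 hi with rfl | hi
  · exact (hZ x hx).trans (hZ x' hx').symm
  · exact congrFun h ⟨i, hi⟩

theorem card_image_restrict_insert (Y : Finset (∀ i, π i)) (a : ι) (I : Finset ι) :
    #(Y.image (insert a I).restrict)
      = ∑ v ∈ Y.image (· a), #((Y.filter (· a = v)).image I.restrict) := by
  rw [card_eq_sum_card_fiberwise (f := fun z => z ⟨a, mem_insert_self a I⟩)]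
  · refine sum_congr rfl fun v _ => ?_
    rw [filter_image]
    exact card_image_restrict_insert_of_forall_eq (fun x hx => (mem_filter.1 hx).2) I
  · intro z hz
    obtain ⟨x, hx, rfl⟩ := mem_image.1 hz
    exact mem_image_of_mem _ hx

theorem card_image_restrict_le_prod_rpow (C : Finset (Finset ι)) {α : Finset ι → ℝ}
    (hα : ∀ s ∈ C, 0 ≤ α s) (I : Finset ι) (Y : Finset (∀ i, π i))
    (hcov : ∀ i ∈ I, 1 ≤ ∑ s ∈ C with i ∈ s, α s) :
    (#(Y.image I.restrict) : ℝ) ≤ ∏ s ∈ C, (#(Y.image (s ∩ I).restrict) : ℝ) ^ α s := by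
  induction I using Finset.induction_on generalizing Y with
  | empty =>
    rcases Y.eq_empty_or_nonempty with rfl | hY
    · rw [image_empty, card_empty, Nat.cast_zero]
      exact prod_nonneg fun s _ => Real.rpow_nonneg (Nat.cast_nonneg _) _
    · calc (#(Y.image (∅ : Finset ι).restrict) : ℝ) ≤ 1 :=
          mod_cast card_le_one_of_subsingleton _
        _ ≤ _ := one_le_prod fun s hs =>
          Real.one_le_rpow (mod_cast (hY.image _).card_pos) (hα s hs)
  | insert a I _ ih =>
    calc (#(Y.image (insert a I).restrict) : ℝ)
        = ∑ v ∈ Y.image (· a), (#((Y.filter (· a = v)).image I.restrict) : ℝ) := by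
          rw [card_image_restrict_insert, Nat.cast_sum]
      _ ≤ ∑ v ∈ Y.image (· a),
            ∏ s ∈ C, (#((Y.filter (· a = v)).image (s ∩ I).restrict) : ℝ) ^ α s :=
          sum_le_sum fun v _ => ih _ fun i hi => hcov i (mem_insert_of_mem hi)
      _ ≤ ∏ s ∈ C, (#(Y.image (s ∩ insert a I).restrict) : ℝ) ^ α s := by
          refine Real.sum_prod_rpow_le_prod_rpow_of_le C _ (a ∈ ·) hα
            (hcov a (mem_insert_self a I))
            (fun _ _ _ _ => Nat.cast_nonneg _) (fun _ _ => Nat.cast_nonneg _)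
            (fun s _ has => ?_) (fun s _ has v _ => ?_)
          · rw [inter_insert_of_mem has, card_image_restrict_insert, Nat.cast_sum]
          · rw [inter_insert_of_notMem has]
            exact_mod_cast card_le_card (image_subset_image (filter_subset _ _))

end Finset

theorem card_le_prod_proj_rpow_general {k : ℕ} (X : Fin k → Type*)
    [∀ i, DecidableEq (X i)]
    (Y : Finset (∀ i, X i)) (C : Finset (Finset (Fin k))) (α : Finset (Fin k) → ℝ)
    (hα : ∀ s ∈ C, 0 ≤ α s)
    (hcov : ∀ i : Fin k, 1 ≤ ∑ s ∈ C.filter (fun s => i ∈ s), α s) :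
    (Y.card : ℝ)
      ≤ ∏ s ∈ C, ((Y.image (fun x => fun i : {i // i ∈ s} => x i)).card : ℝ) ^ α s := by
  have h := card_image_restrict_le_prod_rpow C hα univ Y fun i _ => hcov i
  rw [card_image_of_injective Y fun x y hxy => funext fun i => congrFun hxy ⟨i, mem_univ i⟩] at h
  exact h.trans_eq (prod_congr rfl fun s _ => by rw [inter_univ]; rfl)

/-- Fractional-covering (Shearer-type) inequality for cardinalities of projections:
for any `Y ⊆ X₁ × ⋯ × X_k` and fractional covering `α` using the collection `C`,
`|Y| ≤ ∏_{s ∈ C} |π_s(Y)|^{α_s}`. -/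
theorem card_le_prod_proj_rpow {k : ℕ} (X : Fin k → Type*)
    [∀ i, Fintype (X i)] [∀ i, DecidableEq (X i)]
    (Y : Finset (∀ i, X i)) (C : Finset (Finset (Fin k))) (α : Finset (Fin k) → ℝ)
    (hα : ∀ s ∈ C, 0 ≤ α s)
    (hcov : ∀ i : Fin k, 1 ≤ ∑ s ∈ C.filter (fun s => i ∈ s), α s) :
    (Y.card : ℝ)
      ≤ ∏ s ∈ C, ((Y.image (fun x => fun i : {i // i ∈ s} => x i)).card : ℝ) ^ α s :=
  card_le_prod_proj_rpow_general X Y C α hα hcov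
end

section
/- Let A, B1,…,Bk be finite subsets of an abelian group G. Then for any D ⊆ B1+⋯+Bk: |A+D|^k ≤ |D|^{k−1} · ∏_{i=1}^k |A+B_i|. -/
/-!
A subset `X ⊆ S` minimising `|X + B| / |X|` satisfies, by the Plünnecke–Petridis inequality,
`|X + D| ≤ d ^ (k - 1) |X + B|` whenever `D ⊆ k • B` and `|D| ≤ d ^ k`. Peeling such minimisers
off `S` one after another costs only a harmonic factor `H(|S|)`.

The `k` different summands are merged into one: in `G^k` the cyclic shifts
`P j = ∏_c B (c + j)` satisfy `D^k ⊆ ∑_j P j ⊆ k • ⋃_j P j` and `|A^k + P j| = ∏_i |A + B i|`.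
This proves the inequality up to a factor `k · H(|A|^k)`. Running the argument in `G^m` makes
the loss grow only linearly in `m`, while both sides are raised to the power `m`, so it
disappears in the limit.
-/

open Finset Pointwise Fintype Filter Topology

lemma harmonic_add_sub_div_le {t s : ℕ} (h : t ≤ s) :
    harmonic t + ((s : ℚ) - t) / s ≤ harmonic s := by
  induction s, h using Nat.le_induction with
  | base => simp
  | succ s hts ih =>
    obtain rfl | hs := (Nat.zero_le s).eq_or_lt
    · obtain rfl : t = 0 := by omega
      simp
    rw [harmonic_succ]
    calc harmonic t + ((↑(s + 1) : ℚ) - t) / ↑(s + 1)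
        = harmonic t + ((s : ℚ) - t) / (s + 1) + (↑(s + 1) : ℚ)⁻¹ := by
          push_cast; field_simp; ring
      _ ≤ harmonic t + ((s : ℚ) - t) / s + (↑(s + 1) : ℚ)⁻¹ := by
          gcongr
          · exact sub_nonneg.2 (by exact_mod_cast hts)
          · linarith
      _ ≤ harmonic s + (↑(s + 1) : ℚ)⁻¹ := by gcongr

lemma le_of_forall_pow_le_pow_mul_add {Q R a b : ℝ} (hR : 0 ≤ R)
    (h : ∀ m : ℕ, Q ^ m ≤ R ^ m * (a * m + b)) : Q ≤ R := by
  by_contra! hRQ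
  obtain rfl | hR := hR.eq_or_lt
  · linarith [h 1]
  have hr : 1 < Q / R := (one_lt_div hR).2 hRQ
  have hlim : Tendsto (fun m : ℕ ↦ (a * m + b) / (Q / R) ^ m) atTop (𝓝 0) := by
    have h1 := (tendsto_pow_const_div_const_pow_of_one_lt 1 hr).const_mul a
    have h0 := (tendsto_pow_const_div_const_pow_of_one_lt 0 hr).const_mul b
    rw [mul_zero] at h1 h0
    rw [← add_zero (0 : ℝ)]
    refine (h1.add h0).congr fun m ↦ ?_
    simp only [pow_one, pow_zero]
    ring
  obtain ⟨m, hm⟩ := (hlim.eventually (gt_mem_nhds one_pos)).exists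
  rw [div_lt_one (by positivity), div_pow, lt_div_iff₀ (by positivity)] at hm
  linarith [h m]

namespace Fintype

lemma piFinset_sum {ι κ M : Type*} [Fintype ι] [DecidableEq ι] [AddCommMonoid M]
    [DecidableEq M] (s : Finset κ) (t : ι → κ → Finset M) :
    piFinset (fun c ↦ ∑ i ∈ s, t c i) = ∑ i ∈ s, piFinset (fun c ↦ t c i) := by
  classical
  induction s using Finset.induction_on with
  | empty => exact piFinset_singleton 0
  | insert a s ha ih => simp only [sum_insert ha, piFinset_add, ih]

end Fintype

namespace Finset

lemma sum_subset_nsmul {ι M : Type*} [AddCommMonoid M] [DecidableEq M] (s : Finset ι)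
    (f : ι → Finset M) {T : Finset M} (hf : ∀ i ∈ s, f i ⊆ T) : ∑ i ∈ s, f i ⊆ #s • T := by
  classical
  induction s using Finset.induction_on with
  | empty => simp
  | insert a s ha ih =>
    rw [sum_insert ha, card_insert_of_notMem ha, succ_nsmul']
    exact add_subset_add (hf a (mem_insert_self a s)) (ih fun i hi ↦ hf i (mem_insert_of_mem hi))

lemma card_add_biUnion_le {ι M : Type*} [Add M] [DecidableEq M] (S : Finset M) (t : Finset ι)
    (f : ι → Finset M) : #(S + t.biUnion f) ≤ ∑ i ∈ t, #(S + f i) := by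
  refine (card_le_card ?_).trans card_biUnion_le
  intro x hx
  simp only [mem_add, mem_biUnion] at hx ⊢
  grind

variable {G : Type*} [AddCommGroup G] [DecidableEq G]

lemma card_add_nsmul_mul_pow_le {X B : Finset G}
    (hX : ∀ X' ⊆ X, #(X + B) * #X' ≤ #(X' + B) * #X) (n : ℕ) :
    #(X + n • B) * #X ^ n ≤ #(X + B) ^ n * #X := by
  induction n with
  | zero => simp
  | succ n ih =>
    calc #(X + (n + 1) • B) * #X ^ (n + 1)
        = #(n • B + X + B) * #X * #X ^ n := by
          rw [succ_nsmul, add_comm (n • B) X, ← add_assoc, pow_succ]; ring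
      _ ≤ #(X + B) * #(n • B + X) * #X ^ n :=
          Nat.mul_le_mul_right _ (pluennecke_petridis_inequality_add _ hX)
      _ = #(X + B) * (#(X + n • B) * #X ^ n) := by rw [add_comm (n • B)]; ring
      _ ≤ #(X + B) * (#(X + B) ^ n * #X) := by gcongr
      _ = #(X + B) ^ (n + 1) * #X := by ring

lemma card_add_le_of_subset_nsmul {X B D : Finset G}
    (hX : ∀ X' ⊆ X, #(X + B) * #X' ≤ #(X' + B) * #X) {k d : ℕ} (hk : k ≠ 0)
    (hD : D ⊆ k • B) (hd : #D ≤ d ^ k) :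
    #(X + D) ≤ d ^ (k - 1) * #(X + B) := by
  obtain rfl | hXne := X.eq_empty_or_nonempty
  · simp
  obtain ⟨k, rfl⟩ := Nat.exists_eq_add_one_of_ne_zero hk
  rw [Nat.add_sub_cancel]
  have hchain : #(X + D) * #X ^ (k + 1) ≤ #(X + B) ^ (k + 1) * #X :=
    (Nat.mul_le_mul_right _ (card_le_card (add_subset_add_left hD))).trans
      (card_add_nsmul_mul_pow_le hX _)
  -- Either the trivial bound `|X + D| ≤ |X| |D|` or the chain above wins, according as the
  -- ratio `|X + B| / |X|` is at least or below `d`.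
  rcases le_or_gt (d * #X) #(X + B) with h | h
  · calc #(X + D) ≤ #X * #D := card_add_le
      _ ≤ #X * d ^ (k + 1) := by gcongr
      _ = d ^ k * (d * #X) := by ring
      _ ≤ d ^ k * #(X + B) := by gcongr
  · refine Nat.le_of_mul_le_mul_right (hchain.trans ?_) (pow_pos hXne.card_pos (k + 1))
    calc #(X + B) ^ (k + 1) * #X = #(X + B) ^ k * #(X + B) * #X := by ring
      _ ≤ (d * #X) ^ k * #(X + B) * #X := by gcongr
      _ = d ^ k * #(X + B) * #X ^ (k + 1) := by ring

lemma exists_subset_forall_card_add_mul_le (S B : Finset G) (hS : S.Nonempty) :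
    ∃ X ⊆ S, X.Nonempty ∧ ∀ X' ⊆ S, #(X + B) * #X' ≤ #(X' + B) * #X := by
  obtain ⟨X, hX, hXmin⟩ := exists_min_image (S.powerset.filter Finset.Nonempty)
    (fun X ↦ (#(X + B) / #X : ℚ)) ⟨S, by simpa using hS⟩
  rw [mem_filter, mem_powerset] at hX
  refine ⟨X, hX.1, hX.2, fun X' hX' ↦ ?_⟩
  obtain rfl | hX'ne := X'.eq_empty_or_nonempty
  · simp
  have := hXmin X' (by simpa [hX'] using hX'ne)
  rw [div_le_div_iff₀ (by exact_mod_cast hX.2.card_pos) (by exact_mod_cast hX'ne.card_pos)]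
    at this
  exact_mod_cast this

lemma card_add_le_mul_harmonic {B D : Finset G} {k d : ℕ} (hk : k ≠ 0) (hD : D ⊆ k • B)
    (hd : #D ≤ d ^ k) (S : Finset G) :
    (#(S + D) : ℚ) ≤ d ^ (k - 1) * #(S + B) * harmonic #S := by
  induction S using Finset.strongInduction with | H S ih =>
  obtain rfl | hS := S.eq_empty_or_nonempty
  · simp
  obtain ⟨X, hXS, hX, hXmin⟩ := exists_subset_forall_card_add_mul_le S B hS
  have hpiece : #(X + D) ≤ d ^ (k - 1) * #(X + B) :=
    card_add_le_of_subset_nsmul (fun X' hX' ↦ hXmin X' (hX'.trans hXS)) hk hD hd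
  have hrest := ih (S \ X) (sdiff_ssubset hXS hX)
  have hsplit : #(S + D) ≤ #(X + D) + #(S \ X + D) := by
    rw [← union_sdiff_of_subset hXS, union_add, union_sdiff_of_subset hXS]
    exact card_union_le _ _
  have hXB : (#(X + B) : ℚ) ≤ #(S + B) * (#X / #S) := by
    rw [mul_div_assoc', le_div_iff₀ (by exact_mod_cast hS.card_pos)]
    exact_mod_cast hXmin S subset_rfl
  have hSXB : (#(S \ X + B) : ℚ) ≤ #(S + B) := by
    exact_mod_cast card_le_card (add_subset_add_right sdiff_subset)
  have hharm : (#X / #S : ℚ) + harmonic #(S \ X) ≤ harmonic #S := by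
    have := harmonic_add_sub_div_le (card_le_card (sdiff_subset (s := S) (t := X)))
    rw [card_sdiff_of_subset hXS] at this ⊢
    rwa [Nat.cast_sub (card_le_card hXS), sub_sub_cancel, add_comm] at this
  calc (#(S + D) : ℚ) ≤ #(X + D) + #(S \ X + D) := by exact_mod_cast hsplit
    _ ≤ d ^ (k - 1) * #(X + B) + d ^ (k - 1) * #(S \ X + B) * harmonic #(S \ X) := by
        gcongr
        exact_mod_cast hpiece
    _ ≤ d ^ (k - 1) * (#(S + B) * (#X / #S)) + d ^ (k - 1) * #(S + B) * harmonic #(S \ X) := by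
        gcongr
        unfold harmonic
        positivity
    _ = d ^ (k - 1) * #(S + B) * (#X / #S + harmonic #(S \ X)) := by ring
    _ ≤ d ^ (k - 1) * #(S + B) * harmonic #S := by gcongr

theorem card_add_pow_le_harmonic {k : ℕ} (hk : k ≠ 0) (A D : Finset G) (B : Fin k → Finset G)
    (hD : D ⊆ ∑ i, B i) :
    (#(A + D) : ℚ) ^ k ≤ #D ^ (k - 1) * (k * ∏ i, #(A + B i)) * harmonic (#A ^ k) := by
  have : NeZero k := ⟨hk⟩
  set P : Fin k → Finset (Fin k → G) := fun j ↦ piFinset fun c ↦ B (c + j)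
  set 𝒜 := piFinset fun _ : Fin k ↦ A
  have hsub : piFinset (fun _ : Fin k ↦ D) ⊆ k • univ.biUnion P := calc
    _ ⊆ piFinset fun c ↦ ∑ j, B (c + j) := piFinset_subset _ _ fun c ↦
          hD.trans_eq (Equiv.sum_comp (Equiv.addLeft c) B).symm
    _ = ∑ j, P j := piFinset_sum _ _
    _ ⊆ k • univ.biUnion P := by
          simpa using sum_subset_nsmul univ P fun j _ ↦ subset_biUnion_of_mem P (mem_univ j)
  have hcover : #(𝒜 + univ.biUnion P) ≤ k * ∏ i, #(A + B i) := calc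
    _ ≤ ∑ j, #(𝒜 + P j) := card_add_biUnion_le _ _ _
    _ = ∑ _j : Fin k, ∏ i, #(A + B i) := by
          refine sum_congr rfl fun j _ ↦ ?_
          rw [← piFinset_add, card_piFinset]
          exact Fintype.prod_equiv (Equiv.addRight j) _ _ fun _ ↦ rfl
    _ = k * ∏ i, #(A + B i) := by simp
  have h := card_add_le_mul_harmonic hk hsub (d := #D) (by simp) 𝒜
  rw [← piFinset_add, card_piFinset_const, card_piFinset_const] at h
  push_cast at h
  calc (#(A + D) : ℚ) ^ k ≤ #D ^ (k - 1) * #(𝒜 + univ.biUnion P) * harmonic (#A ^ k) := h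
    _ ≤ #D ^ (k - 1) * (k * ∏ i, #(A + B i)) * harmonic (#A ^ k) := by
        gcongr
        · unfold harmonic; positivity
        · exact_mod_cast hcover

theorem card_add_pow_pow_le {k : ℕ} (hk : k ≠ 0) (A D : Finset G) (B : Fin k → Finset G)
    (hD : D ⊆ ∑ i, B i) (m : ℕ) :
    ((#(A + D) : ℝ) ^ k) ^ m ≤
      ((#D : ℝ) ^ (k - 1) * ∏ i, (#(A + B i) : ℝ)) ^ m * (k ^ 2 * Real.log #A * m + k) := by
  have hDm : piFinset (fun _ : Fin m ↦ D) ⊆ ∑ i, piFinset fun _ : Fin m ↦ B i :=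
    (piFinset_subset _ _ fun _ ↦ hD).trans_eq (piFinset_sum _ _)
  have h := card_add_pow_le_harmonic hk (piFinset fun _ ↦ A) _ _ hDm
  simp only [← piFinset_add, card_piFinset_const] at h
  have h' : ((#(A + D) : ℝ) ^ m) ^ k ≤
      ((#D : ℝ) ^ m) ^ (k - 1) * (k * ∏ i, (#(A + B i) : ℝ) ^ m) * harmonic ((#A ^ m) ^ k) := by
    exact_mod_cast h
  have hlog : (harmonic ((#A ^ m) ^ k) : ℝ) ≤ 1 + k * m * Real.log #A := by
    refine (harmonic_le_one_add_log _).trans_eq ?_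
    push_cast
    rw [Real.log_pow, Real.log_pow]
    ring
  calc ((#(A + D) : ℝ) ^ k) ^ m = ((#(A + D) : ℝ) ^ m) ^ k := by ring
    _ ≤ ((#D : ℝ) ^ m) ^ (k - 1) * (k * ∏ i, (#(A + B i) : ℝ) ^ m) * (1 + k * m * Real.log #A) :=
        h'.trans (by gcongr)
    _ = ((#D : ℝ) ^ (k - 1) * ∏ i, (#(A + B i) : ℝ)) ^ m * (k ^ 2 * Real.log #A * m + k) := by
        rw [mul_pow, prod_pow, ← pow_mul, ← pow_mul, mul_comm m]
        ring

end Finset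

theorem sumset_singleton_cover_general {G : Type*} [AddCommGroup G] [DecidableEq G] {k : ℕ}
    (A : Finset G) (B : Fin k → Finset G)
    (D : Finset G) (hD : D ⊆ ∑ i, B i) :
    (A + D).card ^ k ≤ D.card ^ (k - 1) * ∏ i, (A + B i).card := by
  obtain rfl | hk := eq_or_ne k 0
  · simp
  exact_mod_cast le_of_forall_pow_le_pow_mul_add (by positivity) (card_add_pow_pow_le hk A D B hD)

/-- Gyarmati–Matolcsi–Ruzsa: for finite nonempty subsets `A, B₁, …, B_k` of an
abelian group and any `D ⊆ B₁ + ⋯ + B_k`, `|A+D|^k ≤ |D|^{k-1} · ∏ᵢ |A+Bᵢ|`. -/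
theorem sumset_singleton_cover {G : Type*} [AddCommGroup G] [DecidableEq G] {k : ℕ}
    (A : Finset G) (hA : A.Nonempty) (B : Fin k → Finset G) (hB : ∀ i, (B i).Nonempty)
    (D : Finset G) (hD : D ⊆ ∑ i, B i) (hDne : D.Nonempty) :
    (A + D).card ^ k ≤ D.card ^ (k - 1) * ∏ i, (A + B i).card :=
  sumset_singleton_cover_general A B D hD
end

section
/- Let S, T, U be finite nonempty subsets of a (possibly non-abelian) group G. Then |S·T·U|^2 ≤ |S·T| · |T·U| · max_{t∈T} |S·t·U|. -/
open Finset Pointwise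

/-!
Induct on `T`. Adding `t` to `T` adds to `S·T·U` only the set `B` of elements of `S·t·U` outside
`S·T·U`. An element `s t u ∈ B` has `s t ∉ S·T` and `t u ∉ T·U` and equals `(s t) t⁻¹ (t u)`, so
`|B| ≤ β δ`, where `β` and `δ` count the elements that `t` adds to `S·T` and to `T·U`; moreover
`|B| ≤ |S·t·U| ≤ M`, the new maximum. With `a = |S·T·U|`, `α = |S·T|`, `γ = |T·U|`, AM-GM turns
`a² ≤ α γ M` and `|B|² ≤ β δ M` into `2 a |B| ≤ (α δ + β γ) M`, which closes the induction.
-/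

theorem add_sq_le_add_mul_add_mul {a b α β γ δ M : ℕ} (ha : a ^ 2 ≤ α * γ * M)
    (hb : b ≤ β * δ) (hbM : b ≤ M) : (a + b) ^ 2 ≤ (α + β) * (γ + δ) * M := by
  have hb₂ : b ^ 2 ≤ β * δ * M := sq b ▸ Nat.mul_le_mul hb hbM
  have hab : 2 * (a * b) ≤ α * δ * M + β * γ * M := by
    refine two_mul_le_add_of_sq_le_mul (Nat.zero_le _) (Nat.zero_le _) ?_
    calc (a * b) ^ 2 = a ^ 2 * b ^ 2 := mul_pow a b 2
      _ ≤ α * γ * M * (β * δ * M) := Nat.mul_le_mul ha hb₂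
      _ = α * δ * M * (β * γ * M) := by ring
  linarith

theorem card_mul_singleton_mul_sdiff_le {G : Type*} [Group G] [DecidableEq G]
    (S T U : Finset G) (t : G) :
    #((S * {t} * U) \ (S * T * U)) ≤ #((S * {t}) \ (S * T)) * #(({t} * U) \ (T * U)) := by
  have hsub : (S * {t} * U) \ (S * T * U) ⊆
      ((S * {t}) \ (S * T)) * {t⁻¹} * (({t} * U) \ (T * U)) := by
    intro x hx
    obtain ⟨hx, hxT⟩ := mem_sdiff.mp hx
    obtain ⟨_, hp, u, hu, rfl⟩ := mem_mul.mp hx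
    obtain ⟨s, hs, t', ht', rfl⟩ := mem_mul.mp hp
    rw [mem_singleton] at ht'
    subst t'
    have hst : s * t ∉ S * T := fun h => hxT (mul_mem_mul h hu)
    have htu : t * u ∉ T * U := fun h => hxT (by simpa only [mul_assoc] using mul_mem_mul hs h)
    have hst' : s * t * t⁻¹ ∈ ((S * {t}) \ (S * T)) * {t⁻¹} :=
      mul_mem_mul (mem_sdiff.mpr ⟨mul_mem_mul hs (mem_singleton_self t), hst⟩)
        (mem_singleton_self _)
    have htu' : t * u ∈ ({t} * U) \ (T * U) :=
      mem_sdiff.mpr ⟨mul_mem_mul (mem_singleton_self t) hu, htu⟩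
    exact mem_mul.mpr ⟨_, hst', _, htu', by group⟩
  calc #((S * {t} * U) \ (S * T * U))
      ≤ #(((S * {t}) \ (S * T)) * {t⁻¹} * (({t} * U) \ (T * U))) := card_le_card hsub
    _ ≤ #(((S * {t}) \ (S * T)) * {t⁻¹}) * #(({t} * U) \ (T * U)) := card_mul_le
    _ = #((S * {t}) \ (S * T)) * #(({t} * U) \ (T * U)) := by rw [card_mul_singleton]

theorem nonabelian_triple_product_general {G : Type*} [Group G] [DecidableEq G]
    (S T U : Finset G) :
    (S * T * U).card ^ 2
      ≤ (S * T).card * (T * U).card * T.sup (fun t => (S * {t} * U).card) := by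
  induction T using Finset.induction_on with
  | empty => simp
  | insert t T _ ih =>
    set M := (insert t T).sup fun t => #(S * {t} * U)
    have hT : #(S * T * U) ^ 2 ≤ #(S * T) * #(T * U) * M :=
      ih.trans (Nat.mul_le_mul_left _ (sup_mono (subset_insert t T)))
    have htM : #((S * {t} * U) \ (S * T * U)) ≤ M := calc
      _ ≤ #(S * {t} * U) := card_le_card sdiff_subset
      _ ≤ M := le_sup (f := fun t => #(S * {t} * U)) (mem_insert_self t T)
    rw [insert_eq, mul_union, union_mul, union_mul, ← card_sdiff_add_card, ← card_sdiff_add_card,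
      ← card_sdiff_add_card]
    linarith [add_sq_le_add_mul_add_mul hT (card_mul_singleton_mul_sdiff_le S T U t) htM]

/-- Ruzsa's triangle-type inequality in a (possibly non-abelian) group:
`|S·T·U|² ≤ |S·T| · |T·U| · max_{t∈T} |S·t·U|`. -/
theorem nonabelian_triple_product {G : Type*} [Group G] [DecidableEq G]
    (S T U : Finset G) (hS : S.Nonempty) (hT : T.Nonempty) (hU : U.Nonempty) :
    (S * T * U).card ^ 2
      ≤ (S * T).card * (T * U).card * T.sup (fun t => (S * {t} * U).card) :=
  nonabelian_triple_product_general S T U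
end

section
/- Let X1,…,Xn be finite nonempty subsets of some set, let f be a function of n arguments admitting well-defined restrictions f_s to subsets s of arguments such that f is partition-determined with respect to a collection C of subsets of [n] (i.e., for each s ∈ C, the values f_s(x) and f_{s̄}(x) jointly determine f(x)). If α is a fractional covering of [n] using C, then |f(X1,…,Xn)| ≤ ∏_{s∈C} |f_s(X_{i}: i∈s)|^{α_s}, where f(X1,…,Xn) = {f(x1,…,xn) : xi ∈ Xi}. -/
/-!
In every fibre of `f = F univ` on the box `X₁ × ⋯ × Xₙ` pick the lexicographically least point;
these points form a set `R` with `|f(X)| ≤ |R|`. If two points of `R` have the same `f_s`-value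
for some `s ∈ C`, splicing one into the other on `s` stays in the same fibre (this is where
partition-determinedness enters) and is lexicographically smaller unless the two points already
agree on `s`. Hence the projection `R_s` of `R` to the coordinates in `s` has at most `|f_s(X)|`
points, and Shearer's lemma for fractional coverings, `|R| ≤ ∏_{s ∈ C} |R_s| ^ α_s` (induction
on the coordinates, using Hölder's inequality), concludes.
-/

open Finset

namespace Real

variable {ι κ : Type*} {s : Finset ι} {t : Finset κ} {w : ι → ℝ} {f : ι → κ → ℝ}

theorem sum_prod_rpow_le_prod_sum_rpow_s16 (hw : ∀ i ∈ s, 0 ≤ w i) (hw1 : ∑ i ∈ s, w i = 1)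
    (hf : ∀ i ∈ s, ∀ j ∈ t, 0 ≤ f i j) (hS : ∀ i ∈ s, 0 < ∑ j ∈ t, f i j) :
    ∑ j ∈ t, ∏ i ∈ s, f i j ^ w i ≤ ∏ i ∈ s, (∑ j ∈ t, f i j) ^ w i := by
  set S : ι → ℝ := fun i => ∑ j ∈ t, f i j
  have hSw : 0 ≤ ∏ i ∈ s, S i ^ w i := prod_nonneg fun i hi => rpow_nonneg (hS i hi).le _
  -- Normalising each row by its sum reduces Hölder to the weighted AM-GM inequality.
  have pointwise : ∀ j ∈ t,
      ∏ i ∈ s, f i j ^ w i ≤ (∏ i ∈ s, S i ^ w i) * ∑ i ∈ s, w i * (f i j / S i) := by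
    intro j hj
    have hz : ∀ i ∈ s, 0 ≤ f i j / S i := fun i hi => div_nonneg (hf i hi j hj) (hS i hi).le
    calc ∏ i ∈ s, f i j ^ w i = ∏ i ∈ s, S i ^ w i * (f i j / S i) ^ w i :=
          prod_congr rfl fun i hi => by
            rw [← mul_rpow (hS i hi).le (hz i hi), mul_div_cancel₀ _ (hS i hi).ne']
      _ = (∏ i ∈ s, S i ^ w i) * ∏ i ∈ s, (f i j / S i) ^ w i := prod_mul_distrib
      _ ≤ _ := mul_le_mul_of_nonneg_left
          (geom_mean_le_arith_mean_weighted s w _ hw hw1 hz) hSw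
  calc ∑ j ∈ t, ∏ i ∈ s, f i j ^ w i
      ≤ ∑ j ∈ t, (∏ i ∈ s, S i ^ w i) * ∑ i ∈ s, w i * (f i j / S i) := sum_le_sum pointwise
    _ = (∏ i ∈ s, S i ^ w i) * ∑ i ∈ s, w i * (S i / S i) := by
        rw [← mul_sum, sum_comm]
        simp only [← mul_sum, ← sum_div, S]
    _ = ∏ i ∈ s, S i ^ w i := by
        rw [sum_congr rfl fun i hi => by rw [div_self (hS i hi).ne', mul_one], hw1, mul_one]

theorem sum_prod_rpow_le_prod_sum_rpow_of_one_le (hw : ∀ i ∈ s, 0 ≤ w i)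
    (hw1 : 1 ≤ ∑ i ∈ s, w i) (hf : ∀ i ∈ s, ∀ j ∈ t, 0 ≤ f i j)
    (hS : ∀ i ∈ s, 0 < ∑ j ∈ t, f i j) :
    ∑ j ∈ t, ∏ i ∈ s, f i j ^ w i ≤ ∏ i ∈ s, (∑ j ∈ t, f i j) ^ w i := by
  set S : ι → ℝ := fun i => ∑ j ∈ t, f i j
  set γ := ∑ i ∈ s, w i
  have hγ : 0 < γ := one_pos.trans_le hw1
  have hv : ∀ i ∈ s, 0 ≤ w i / γ := fun i hi => div_nonneg (hw i hi) hγ.le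
  have hwv : ∀ i ∈ s, 0 ≤ w i - w i / γ := fun i hi => sub_nonneg.2 (div_le_self (hw i hi) hw1)
  have hSpow : 0 ≤ ∏ i ∈ s, S i ^ (w i - w i / γ) :=
    prod_nonneg fun i hi => rpow_nonneg (hS i hi).le _
  -- Split `w = (w - w/γ) + w/γ`: bound the first part by the row sums, apply Hölder to the rest.
  have pointwise : ∀ j ∈ t, ∏ i ∈ s, f i j ^ w i
      ≤ (∏ i ∈ s, S i ^ (w i - w i / γ)) * ∏ i ∈ s, f i j ^ (w i / γ) := by
    intro j hj
    rw [← prod_mul_distrib]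
    refine prod_le_prod (fun i hi => rpow_nonneg (hf i hi j hj) _) fun i hi => ?_
    rw [← sub_add_cancel (w i) (w i / γ), rpow_add_of_nonneg (hf i hi j hj) (hwv i hi) (hv i hi),
      sub_add_cancel]
    exact mul_le_mul_of_nonneg_right
      (rpow_le_rpow (hf i hi j hj) (single_le_sum (hf i hi) hj) (hwv i hi))
      (rpow_nonneg (hf i hi j hj) _)
  calc ∑ j ∈ t, ∏ i ∈ s, f i j ^ w i
      ≤ ∑ j ∈ t, (∏ i ∈ s, S i ^ (w i - w i / γ)) * ∏ i ∈ s, f i j ^ (w i / γ) :=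
        sum_le_sum pointwise
    _ = (∏ i ∈ s, S i ^ (w i - w i / γ)) * ∑ j ∈ t, ∏ i ∈ s, f i j ^ (w i / γ) := by
        rw [mul_sum]
    _ ≤ (∏ i ∈ s, S i ^ (w i - w i / γ)) * ∏ i ∈ s, S i ^ (w i / γ) :=
        mul_le_mul_of_nonneg_left (sum_prod_rpow_le_prod_sum_rpow_s16 hv
          (by rw [← sum_div, div_self hγ.ne']) hf hS) hSpow
    _ = ∏ i ∈ s, S i ^ w i := by
        rw [← prod_mul_distrib]
        exact prod_congr rfl fun i hi => by rw [← rpow_add (hS i hi), sub_add_cancel]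

theorem sum_prod_rpow_le_prod_rpow_of_covering (p : ι → Prop) [DecidablePred p]
    {N : ι → ℝ} (hw : ∀ i ∈ s, 0 ≤ w i) (hp : 1 ≤ ∑ i ∈ s with p i, w i)
    (hf : ∀ i ∈ s, ∀ j ∈ t, 0 ≤ f i j) (hfN : ∀ i ∈ s, ¬ p i → ∀ j ∈ t, f i j ≤ N i)
    (hS : ∀ i ∈ s, p i → 0 < ∑ j ∈ t, f i j) (hSN : ∀ i ∈ s, p i → ∑ j ∈ t, f i j ≤ N i) :
    ∑ j ∈ t, ∏ i ∈ s, f i j ^ w i ≤ ∏ i ∈ s, N i ^ w i := by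
  have ht : t.Nonempty := by
    obtain ⟨i, hi⟩ := nonempty_of_sum_ne_zero (one_pos.trans_le hp).ne'
    obtain ⟨his, hpi⟩ := mem_filter.1 hi
    exact nonempty_of_sum_ne_zero (hS i his hpi).ne'
  obtain ⟨j₀, hj₀⟩ := ht
  have hN : 0 ≤ ∏ i ∈ s with ¬ p i, N i ^ w i := prod_nonneg fun i hi => by
    obtain ⟨his, hpi⟩ := mem_filter.1 hi
    exact rpow_nonneg ((hf i his j₀ hj₀).trans (hfN i his hpi j₀ hj₀)) _
  have pointwise : ∀ j ∈ t, ∏ i ∈ s, f i j ^ w i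
      ≤ (∏ i ∈ s with p i, f i j ^ w i) * ∏ i ∈ s with ¬ p i, N i ^ w i := by
    intro j hj
    rw [← prod_filter_mul_prod_filter_not s p]
    refine mul_le_mul_of_nonneg_left (prod_le_prod (fun i hi => ?_) fun i hi => ?_) ?_
    · exact rpow_nonneg (hf i (mem_filter.1 hi).1 j hj) _
    · obtain ⟨his, hpi⟩ := mem_filter.1 hi
      exact rpow_le_rpow (hf i his j hj) (hfN i his hpi j hj) (hw i his)
    · exact prod_nonneg fun i hi => rpow_nonneg (hf i (mem_filter.1 hi).1 j hj) _
  calc ∑ j ∈ t, ∏ i ∈ s, f i j ^ w i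
      ≤ ∑ j ∈ t, (∏ i ∈ s with p i, f i j ^ w i) * ∏ i ∈ s with ¬ p i, N i ^ w i :=
        sum_le_sum pointwise
    _ = (∑ j ∈ t, ∏ i ∈ s with p i, f i j ^ w i) * ∏ i ∈ s with ¬ p i, N i ^ w i := by
        rw [sum_mul]
    _ ≤ (∏ i ∈ s with p i, (∑ j ∈ t, f i j) ^ w i) * ∏ i ∈ s with ¬ p i, N i ^ w i := by
        refine mul_le_mul_of_nonneg_right ?_ hN
        refine sum_prod_rpow_le_prod_sum_rpow_of_one_le (fun i hi => hw i (mem_filter.1 hi).1) hp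
          (fun i hi => hf i (mem_filter.1 hi).1) fun i hi => ?_
        exact hS i (mem_filter.1 hi).1 (mem_filter.1 hi).2
    _ ≤ (∏ i ∈ s with p i, N i ^ w i) * ∏ i ∈ s with ¬ p i, N i ^ w i := by
        refine mul_le_mul_of_nonneg_right (prod_le_prod (fun i hi => ?_) fun i hi => ?_) hN
        · exact rpow_nonneg (sum_nonneg (hf i (mem_filter.1 hi).1)) _
        · obtain ⟨his, hpi⟩ := mem_filter.1 hi
          exact rpow_le_rpow (sum_nonneg (hf i his)) (hSN i his hpi) (hw i his)
    _ = ∏ i ∈ s, N i ^ w i := prod_filter_mul_prod_filter_not s p _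

end Real

namespace Finset

theorem card_image_le_card_image_of_determines {σ γ δ : Type*} [DecidableEq γ] [DecidableEq δ]
    {R : Finset σ} {g : σ → γ} {h : σ → δ}
    (hgh : ∀ x ∈ R, ∀ y ∈ R, h x = h y → g x = g y) : #(R.image g) ≤ #(R.image h) := by
  rcases isEmpty_or_nonempty σ with hσ | hσ
  · simp [R.eq_empty_of_isEmpty]
  refine card_le_card_of_surjOn (g ∘ Function.invFunOn h R) fun b hb => ?_
  obtain ⟨x, hx, rfl⟩ := mem_image.1 (mem_coe.1 hb)
  obtain ⟨hmem, heq⟩ := Function.invFunOn_pos (b := h x) ⟨x, hx, rfl⟩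
  exact ⟨h x, mem_image_of_mem h hx, hgh _ hmem x hx heq⟩

theorem sum_card_image_filter_le {σ τ γ : Type*} [DecidableEq τ] [DecidableEq γ]
    (R : Finset σ) (T : Finset τ) {k : σ → τ} {g : σ → γ}
    (hk : ∀ x ∈ R, ∀ y ∈ R, g x = g y → k x = k y) :
    ∑ t ∈ T, #({x ∈ R | k x = t}.image g) ≤ #(R.image g) := by
  rw [← card_biUnion]
  · exact card_le_card (biUnion_subset.2 fun t _ => image_subset_image (filter_subset _ _))
  · intro t _ t' _ htt'
    refine disjoint_left.2 fun b hb hb' => htt' ?_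
    obtain ⟨x, hx, rfl⟩ := mem_image.1 hb
    obtain ⟨y, hy, hyx⟩ := mem_image.1 hb'
    rw [mem_filter] at hx hy
    rw [← hx.2, ← hy.2, hk y hy.1 x hx.1 hyx]

variable {ι β : Type*} [DecidableEq ι] [DecidableEq β] {C : Finset (Finset ι)} {α : Finset ι → ℝ}

theorem card_le_prod_card_image_restrict_rpow_of_determined (hα : ∀ s ∈ C, 0 ≤ α s)
    (u : Finset ι) (R : Finset (ι → β)) (hcov : ∀ i ∈ u, 1 ≤ ∑ s ∈ C with i ∈ s, α s)
    (hR : ∀ x ∈ R, ∀ y ∈ R, (∀ i ∈ u, x i = y i) → x = y) :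
    (#R : ℝ) ≤ ∏ s ∈ C, (#(R.image s.restrict) : ℝ) ^ α s := by
  rcases R.eq_empty_or_nonempty with rfl | ⟨x₀, hx₀⟩
  · simp only [card_empty, Nat.cast_zero]
    exact prod_nonneg fun s _ => by positivity
  induction u using Finset.induction_on generalizing R x₀ with
  | empty =>
    obtain rfl : R = {x₀} :=
      eq_singleton_iff_unique_mem.2 ⟨hx₀, fun y hy => hR y hy x₀ hx₀ (by simp)⟩
    simp
  | @insert j u hj ih =>
    have hfib : ∀ t, ∀ x ∈ {x ∈ R | x j = t}, ∀ y ∈ {x ∈ R | x j = t},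
        (∀ i ∈ u, x i = y i) → x = y := by
      intro t x hx y hy hxy
      rw [mem_filter] at hx hy
      exact hR x hx.1 y hy.1 (forall_mem_insert _ _ _ |>.2 ⟨hx.2.trans hy.2.symm, hxy⟩)
    calc (#R : ℝ) = ∑ t ∈ R.image (· j), (#{x ∈ R | x j = t} : ℝ) := by
          exact_mod_cast card_eq_sum_card_image _ _
      _ ≤ ∑ t ∈ R.image (· j), ∏ s ∈ C, (#({x ∈ R | x j = t}.image s.restrict) : ℝ) ^ α s :=
          sum_le_sum fun t ht => by
            obtain ⟨x, hx, rfl⟩ := mem_image.1 ht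
            exact ih _ (fun i hi => hcov i (mem_insert_of_mem hi)) (hfib _) x
              (mem_filter.2 ⟨hx, rfl⟩ : x ∈ {y ∈ R | y j = x j})
      _ ≤ ∏ s ∈ C, (#(R.image s.restrict) : ℝ) ^ α s := by
          refine Real.sum_prod_rpow_le_prod_rpow_of_covering (j ∈ ·) hα
            (hcov j (mem_insert_self j u)) (fun _ _ _ _ => by positivity) ?_ ?_ ?_
          · intro s _ _ t _
            exact_mod_cast card_le_card (image_subset_image (filter_subset _ _))
          · intro s _ hjs
            refine sum_pos' (fun _ _ => by positivity) ⟨x₀ j, mem_image_of_mem _ hx₀, ?_⟩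
            exact_mod_cast card_pos.2 ⟨_, mem_image_of_mem s.restrict
              (mem_filter.2 ⟨hx₀, rfl⟩ : x₀ ∈ {x ∈ R | x j = x₀ j})⟩
          · intro s _ hjs
            exact_mod_cast sum_card_image_filter_le R _ (k := (· j)) (g := s.restrict)
              fun x _ y _ hxy => congrFun hxy ⟨j, hjs⟩

theorem card_le_prod_card_image_restrict_rpow [Fintype ι] (hα : ∀ s ∈ C, 0 ≤ α s)
    (hcov : ∀ i, 1 ≤ ∑ s ∈ C with i ∈ s, α s) (R : Finset (ι → β)) :
    (#R : ℝ) ≤ ∏ s ∈ C, (#(R.image s.restrict) : ℝ) ^ α s :=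
  card_le_prod_card_image_restrict_rpow_of_determined hα univ R (fun i _ => hcov i)
    fun _ _ _ _ h => funext fun i => h i (mem_univ i)

end Finset

section LexMinReps

variable {ι β V : Type*} [LinearOrder ι] [LinearOrder β]

open Classical in
noncomputable def lexMinReps (S : Finset (ι → β)) (f : (ι → β) → V) : Finset (ι → β) :=
  {x ∈ S | ∀ y ∈ S, f y = f x → ¬ toLex y < toLex x}

theorem mem_lexMinReps {S : Finset (ι → β)} {f : (ι → β) → V} {x : ι → β} :
    x ∈ lexMinReps S f ↔ x ∈ S ∧ ∀ y ∈ S, f y = f x → ¬ toLex y < toLex x := by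
  classical
  simp [lexMinReps]

theorem image_lexMinReps [DecidableEq V] (S : Finset (ι → β)) (f : (ι → β) → V) :
    (lexMinReps S f).image f = S.image f := by
  classical
  refine (image_subset_image fun x hx => (mem_lexMinReps.1 hx).1).antisymm fun v hv => ?_
  obtain ⟨x, hx, rfl⟩ := mem_image.1 hv
  obtain ⟨m, hm, hmin⟩ := Finset.exists_minimalFor toLex {y ∈ S | f y = f x} ⟨x, by simp [hx]⟩
  rw [mem_filter] at hm
  refine mem_image.2 ⟨m, mem_lexMinReps.2 ⟨hm.1, fun y hy hfy hlt => ?_⟩, hm.2⟩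
  exact (hmin (mem_filter.2 ⟨hy, hfy.trans hm.2⟩) hlt.le).not_gt hlt

variable [Fintype ι] {W W' : Type*} {X : ι → Finset β} {f : (ι → β) → V} {s : Finset ι}
  {g : (ι → β) → W} {g' : (ι → β) → W'}

theorem le_of_mem_lexMinReps
    (hg : ∀ x y, (∀ i ∈ s, x i = y i) → g x = g y)
    (hg' : ∀ x y, (∀ i ∈ sᶜ, x i = y i) → g' x = g' y)
    (hf : ∀ x y, (∀ i, x i ∈ X i) → (∀ i, y i ∈ X i) → g x = g y → g' x = g' y → f x = f y)
    {x y : ι → β} (hx : ∀ i, x i ∈ X i) (hy : y ∈ lexMinReps (Fintype.piFinset X) f)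
    (hxy : g x = g y) {i : ι} (hi : i ∈ s) (hlt : ∀ j ∈ s, j < i → x j = y j) : y i ≤ x i := by
  obtain ⟨hyX, hymin⟩ := mem_lexMinReps.1 hy
  rw [Fintype.mem_piFinset] at hyX
  by_contra! h
  -- Splicing `x` into `y` on `s` keeps the value of `f` but is lexicographically smaller.
  set z := s.piecewise x y
  have hzX : ∀ k, z k ∈ X k := fun k => by
    by_cases hk : k ∈ s
    · simpa [z, hk] using hx k
    · simpa [z, hk] using hyX k
  have hfz : f z = f y := hf z y hzX hyX
    ((hg z x fun k hk => s.piecewise_eq_of_mem _ _ hk).trans hxy)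
    (hg' z y fun k hk => s.piecewise_eq_of_notMem _ _ (mem_compl.1 hk))
  refine hymin z (Fintype.mem_piFinset.2 hzX) hfz ⟨i, fun j hj => ?_, ?_⟩
  · by_cases hjs : j ∈ s
    · simp [z, hjs, hlt j hjs hj]
    · simp [z, hjs]
  · simpa [z, hi] using h

theorem eqOn_of_mem_lexMinReps
    (hg : ∀ x y, (∀ i ∈ s, x i = y i) → g x = g y)
    (hg' : ∀ x y, (∀ i ∈ sᶜ, x i = y i) → g' x = g' y)
    (hf : ∀ x y, (∀ i, x i ∈ X i) → (∀ i, y i ∈ X i) → g x = g y → g' x = g' y → f x = f y)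
    {x y : ι → β} (hx : x ∈ lexMinReps (Fintype.piFinset X) f)
    (hy : y ∈ lexMinReps (Fintype.piFinset X) f) (hxy : g x = g y) : ∀ i ∈ s, x i = y i := by
  by_contra! hne
  have hX : ∀ {z}, z ∈ lexMinReps (Fintype.piFinset X) f → ∀ i, z i ∈ X i :=
    fun hz => Fintype.mem_piFinset.1 (mem_lexMinReps.1 hz).1
  set D := {i ∈ s | x i ≠ y i}
  have hD : D.Nonempty := by
    obtain ⟨i, hi, hxi⟩ := hne
    exact ⟨i, mem_filter.2 ⟨hi, hxi⟩⟩
  obtain ⟨hi, -⟩ := mem_filter.1 (D.min'_mem hD)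
  have hlt : ∀ j ∈ s, j < D.min' hD → x j = y j := fun j hj hjlt => by
    by_contra hxyj
    exact (D.min'_le j (mem_filter.2 ⟨hj, hxyj⟩)).not_gt hjlt
  refine (mem_filter.1 (D.min'_mem hD)).2 (le_antisymm ?_ ?_)
  · exact le_of_mem_lexMinReps hg hg' hf (hX hy) hx hxy.symm hi
      fun j hj hjlt => (hlt j hj hjlt).symm
  · exact le_of_mem_lexMinReps hg hg' hf (hX hx) hy hxy hi hlt

end LexMinReps

theorem compound_set_fractional_covering_general {n : ℕ} {β V : Type*} [DecidableEq V]
    (X : Fin n → Finset β)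
    (F : Finset (Fin n) → (Fin n → β) → V)
    (hrestr : ∀ (s : Finset (Fin n)) (x y : Fin n → β),
      (∀ i ∈ s, x i = y i) → F s x = F s y)
    (C : Finset (Finset (Fin n)))
    (hpd : ∀ s ∈ C, ∀ x y : Fin n → β, (∀ i, x i ∈ X i) → (∀ i, y i ∈ X i) →
      F s x = F s y → F sᶜ x = F sᶜ y → F Finset.univ x = F Finset.univ y)
    (α : Finset (Fin n) → ℝ) (hα : ∀ s ∈ C, 0 ≤ α s)
    (hcov : ∀ i : Fin n, 1 ≤ ∑ s ∈ C.filter (fun s => i ∈ s), α s) :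
    (((Fintype.piFinset X).image (F Finset.univ)).card : ℝ)
      ≤ ∏ s ∈ C, (((Fintype.piFinset X).image (F s)).card : ℝ) ^ α s := by
  classical
  let _ : LinearOrder β := WellOrderingRel.isWellOrder.linearOrder
  set R := lexMinReps (Fintype.piFinset X) (F univ)
  have hR : #((Fintype.piFinset X).image (F univ)) ≤ #R := by
    rw [← image_lexMinReps]
    exact card_image_le
  have hRs : ∀ s ∈ C, #(R.image s.restrict) ≤ #((Fintype.piFinset X).image (F s)) :=
    fun s hs => (card_image_le_card_image_of_determines fun x hx y hy hxy => funext fun i =>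
      eqOn_of_mem_lexMinReps (hrestr s) (hrestr sᶜ) (hpd s hs) hx hy hxy i.1 i.2).trans
      (card_le_card (image_subset_image fun x hx => (mem_lexMinReps.1 hx).1))
  calc (#((Fintype.piFinset X).image (F univ)) : ℝ) ≤ #R := by exact_mod_cast hR
    _ ≤ ∏ s ∈ C, (#(R.image s.restrict) : ℝ) ^ α s :=
        card_le_prod_card_image_restrict_rpow hα hcov R
    _ ≤ _ := prod_le_prod (fun _ _ => by positivity) fun s hs =>
        Real.rpow_le_rpow (by positivity) (by exact_mod_cast hRs s hs) (hα s hs)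

/-- Fractional-covering cardinality bound for compound sets built from a
partition-determined function.  Here `F s x` is the restriction `f_s` of `f`
evaluated on the coordinates of `x` in `s` (so it may depend only on those
coordinates), `f = F univ`, and `f` is partition-determined with respect to the
collection `C`: for `s ∈ C`, the values `f_s(x)` and `f_{sᶜ}(x)` determine `f(x)`.
If `α` is a fractional covering of `[n]` using `C`, then
`|f(X₁,…,X_n)| ≤ ∏_{s∈C} |f_s(X_i : i ∈ s)|^{α_s}`. -/
theorem compound_set_fractional_covering {n : ℕ} {β V : Type*} [DecidableEq β] [DecidableEq V]
    (X : Fin n → Finset β) (hX : ∀ i, (X i).Nonempty)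
    (F : Finset (Fin n) → (Fin n → β) → V)
    (hrestr : ∀ (s : Finset (Fin n)) (x y : Fin n → β),
      (∀ i ∈ s, x i = y i) → F s x = F s y)
    (C : Finset (Finset (Fin n)))
    (hpd : ∀ s ∈ C, ∀ x y : Fin n → β, (∀ i, x i ∈ X i) → (∀ i, y i ∈ X i) →
      F s x = F s y → F sᶜ x = F sᶜ y → F Finset.univ x = F Finset.univ y)
    (α : Finset (Fin n) → ℝ) (hα : ∀ s ∈ C, 0 ≤ α s)
    (hcov : ∀ i : Fin n, 1 ≤ ∑ s ∈ C.filter (fun s => i ∈ s), α s) :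
    (((Fintype.piFinset X).image (F Finset.univ)).card : ℝ)
      ≤ ∏ s ∈ C, (((Fintype.piFinset X).image (F s)).card : ℝ) ^ α s :=
  compound_set_fractional_covering_general X F hrestr C hpd α hα hcov
end
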